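/- arXiv:1606.01647 — 8 statements merged into one kernel-verified Lean document; each statement's English description precedes it below -/
import Mathlib

section
/- Let M be a left R-module with simple submodules S and T such that S ∩ T = 0, S + T = M, and S ≅ T as R-modules. Then the cardinality of the set of nontrivial submodules of M equals |End(S)| + 1, where End(S) is the ring of R-module endomorphisms of S. In particular, if End(S) is infinite then M has infinitely many nontrivial submodules. -/
/-!
A nontrivial submodule `N ≠ T` of `M = S ⊕ T` meets the simple module `T` trivially and, since
`T` is a maximal submodule (its complement `S` being simple), also spans `M` together with `T`.
So the nontrivial submodules are `T` and the complements of `T`. The complements of `T` are the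
kernels of the projections onto `T`, such a projection is determined by its restriction to `S`,
which is an arbitrary map `S →ₗ[R] T`, and `S ≅ T` identifies `S →ₗ[R] T` with `End(S)`.
-/

section Lattice

variable {α : Type*} [Lattice α] [BoundedOrder α] [IsModularLattice α] {a b : α}

theorem IsCompl.eq_or_isCompl_of_isAtom (hab : IsCompl a b) (ha : IsAtom a) (hb : IsAtom b)
    {x : α} (hx_bot : x ≠ ⊥) (hx_top : x ≠ ⊤) : x = b ∨ IsCompl x b := by
  have hb' : IsCoatom b := hab.isAtom_iff_isCoatom.mp ha
  refine or_iff_not_imp_left.mpr fun hxb => IsCompl.symm ⟨?_, ?_⟩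
  · exact hb.not_le_iff_disjoint.mp fun hbx => (hb'.le_iff.mp hbx).elim hx_top hxb
  · exact hb'.not_le_iff_codisjoint.mp fun hxb' => (hb.le_iff.mp hxb').elim hx_bot hxb

theorem IsCompl.setOf_ne_bot_ne_top_eq_insert (hab : IsCompl a b) (ha : IsAtom a)
    (hb : IsAtom b) : {x : α | x ≠ ⊥ ∧ x ≠ ⊤} = insert b {x | IsCompl x b} := by
  have hb' : IsCoatom b := hab.isAtom_iff_isCoatom.mp ha
  ext x
  refine ⟨fun ⟨hx_bot, hx_top⟩ => hab.eq_or_isCompl_of_isAtom ha hb hx_bot hx_top, ?_⟩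
  rintro (rfl | hxb)
  · exact ⟨hb.ne_bot, hb'.ne_top⟩
  · exact ⟨fun h => hb'.ne_top (eq_top_of_bot_isCompl (h ▸ hxb)),
      fun h => hb.ne_bot (eq_bot_of_top_isCompl (h ▸ hxb))⟩

theorem IsCompl.mk_setOf_ne_bot_ne_top (hab : IsCompl a b) (ha : IsAtom a) (hb : IsAtom b) :
    Cardinal.mk {x : α | x ≠ ⊥ ∧ x ≠ ⊤} = Cardinal.mk {x : α | IsCompl x b} + 1 := by
  rw [hab.setOf_ne_bot_ne_top_eq_insert ha hb, Cardinal.mk_insert]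
  exact fun hbb => hb.ne_bot (disjoint_self.mp hbb.disjoint)

end Lattice

namespace Submodule

variable {R M : Type*} [Ring R] [AddCommGroup M] [Module R M] {S T : Submodule R M}

noncomputable def projEquivLinearMap (h : IsCompl S T) :
    {f : M →ₗ[R] T // ∀ x : T, f x = x} ≃ (S →ₗ[R] T) where
  toFun f := f.1 ∘ₗ S.subtype
  invFun φ := ⟨LinearMap.ofIsCompl h φ LinearMap.id, LinearMap.ofIsCompl_apply_right h⟩
  left_inv f := Subtype.ext <| LinearMap.ofIsCompl_eq h (fun _ => rfl) fun x => (f.2 x).symm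
  right_inv _ := LinearMap.ext <| LinearMap.ofIsCompl_apply_left h

noncomputable def isComplEquivLinearMap (h : IsCompl S T) : {N : Submodule R M // IsCompl N T} ≃ (S →ₗ[R] T) :=
  (Equiv.subtypeEquivRight fun _ => isCompl_comm).trans <|
    T.isComplEquivProj.trans (projEquivLinearMap h)

end Submodule

/-- Let `M` be a left `R`-module with simple submodules `S` and `T` such that
`S ⊓ T = ⊥`, `S ⊔ T = ⊤`, and `S ≅ T`.  Then the cardinality of the set of nontrivial
submodules of `M` equals `|End(S)| + 1`.  In particular, if `End(S)` is infinite then `M`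
has infinitely many nontrivial submodules. -/
theorem statement2 {R : Type*} [Ring R] {M : Type*} [AddCommGroup M] [Module R M]
    (S T : Submodule R M) (hS : IsSimpleModule R S) (hT : IsSimpleModule R T)
    (h1 : S ⊓ T = ⊥) (h2 : S ⊔ T = ⊤) (hiso : Nonempty (S ≃ₗ[R] T)) :
    Cardinal.mk {N : Submodule R M | N ≠ ⊥ ∧ N ≠ ⊤} =
      Cardinal.mk (Module.End R S) + 1 ∧
    (Infinite (Module.End R S) →
      {N : Submodule R M | N ≠ ⊥ ∧ N ≠ ⊤}.Infinite) := by
  obtain ⟨e⟩ := hiso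
  have hc : IsCompl S T := ⟨disjoint_iff.mpr h1, codisjoint_iff.mpr h2⟩
  have hcard : Cardinal.mk {N : Submodule R M | N ≠ ⊥ ∧ N ≠ ⊤} =
      Cardinal.mk (Module.End R S) + 1 := by
    rw [hc.mk_setOf_ne_bot_ne_top (isSimpleModule_iff_isAtom.mp hS)
      (isSimpleModule_iff_isAtom.mp hT)]
    congr 1
    exact Cardinal.mk_congr <| (Submodule.isComplEquivLinearMap hc).trans
      (LinearEquiv.arrowCongrAddEquiv (LinearEquiv.refl R S) e.symm).toEquiv
  refine ⟨hcard, fun hinf => Set.infinite_coe_iff.mp (Cardinal.infinite_iff.mpr ?_)⟩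
  exact hcard ▸ (Cardinal.infinite_iff.mp hinf).trans le_self_add
end

section
/- Let T be a maximal submodule of a left R-module M. The following conditions are equivalent: (1) |G(M)| is infinite and deg(T) < |G(M)|; (2) all of the following hold: (i) there exists a simple submodule S of M with S ∩ T = 0 and S + T = M; (ii) T contains an essential simple submodule S' with S ≅ S' as R-modules; (iii) |End(S)| = |G(M)| and this cardinal is infinite; (iv) |G(M/S')| + 1 < |G(M)| (as cardinals). -/
/-- The degree of a submodule `N` in the intersection graph `G(M)`. -/
noncomputable def subdeg {R : Type*} [Ring R] {M : Type*} [AddCommGroup M] [Module R M]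
    (N : Submodule R M) : Cardinal :=
  Cardinal.mk {K : Submodule R M | K ≠ ⊥ ∧ K ≠ ⊤ ∧ K ≠ N ∧ K ⊓ N ≠ ⊥}

/-- The order `|G(M)|` of the intersection graph: the cardinality of the set of
nontrivial submodules of `M`. -/
noncomputable def graphOrder (R : Type*) [Ring R] (M : Type*) [AddCommGroup M]
    [Module R M] : Cardinal :=
  Cardinal.mk {N : Submodule R M | N ≠ ⊥ ∧ N ≠ ⊤}

/-! The complements of the maximal submodule `T` are the graphs of the homomorphisms `S → T`,
where `S ≅ M/T` is one fixed complement, and every other nontrivial submodule is `T` or a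
neighbour of `T`. So if `G(M)` is infinite and `deg T` is smaller, `|Hom(S, T)| = |G(M)|`.
Grouping homomorphisms by their image bounds `|Hom(S, T)| ≤ (deg T + 2) · |End S|`, which forces
`|End S| = |G(M)|`. The image `S'` of a nonzero `S → T` is essential in `T`: a nonzero `K ≤ T`
with `S' ∩ K = 0` would give `|End S|` distinct neighbours `graph h + K` of `T`, `h : S → S'`.
Conversely, an essential simple `S' ≤ T` lies in every neighbour of `T`, so apart from `S'`
itself the neighbours of `T` are among the preimages of the nontrivial submodules of `M/S'`. -/

open Cardinal

section Submodules

variable {R : Type*} [Ring R] {M : Type*} [AddCommGroup M] [Module R M]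

lemma graphOrder_eq_mk_Ioo : graphOrder R M = #(Set.Ioo (⊥ : Submodule R M) ⊤) := by
  simp only [graphOrder, Set.Ioo, bot_lt_iff_ne_bot, lt_top_iff_ne_top]

lemma graphOrder_quotient (N : Submodule R M) : graphOrder R (M ⧸ N) = #(Set.Ioo N ⊤) := by
  let e := Submodule.comapMkQOrderEmbedding N
  have hrange : Set.range e = Set.Ici N := by
    ext K
    refine ⟨by rintro ⟨K, rfl⟩; exact Submodule.le_comap_mkQ N K, fun h => ?_⟩
    exact ⟨_, congrArg Subtype.val ((Submodule.comapMkQRelIso N).apply_symm_apply ⟨K, h⟩)⟩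
  rw [graphOrder_eq_mk_Ioo, ← mk_image_eq e.injective,
    e.image_Ioo (hrange ▸ Set.ordConnected_Ici)]
  simp [e]

lemma mk_Ioo_le_subdeg_add_one {N T : Submodule R M} (hNT : N ≤ T) (hN : N ≠ ⊥) :
    #(Set.Ioo N ⊤) ≤ subdeg T + 1 := by
  refine (mk_le_mk_of_subset fun K hK => ?_).trans (mk_insert_le (a := T))
  rcases eq_or_ne K T with rfl | hKT
  · exact Set.mem_insert _ _
  refine Set.mem_insert_of_mem _ ⟨(hK.1.trans_le' bot_le).ne', hK.2.ne, hKT, ?_⟩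
  exact ne_bot_of_le_ne_bot hN (le_inf hK.1.le hNT)

lemma subdeg_le_mk_Ioo_add_one {N T : Submodule R M} (hNT : N ≤ T) (hN : IsAtom N)
    (hess : ∀ K ≤ T, K ≠ ⊥ → N ⊓ K ≠ ⊥) : subdeg T ≤ #(Set.Ioo N ⊤) + 1 := by
  refine (mk_le_mk_of_subset fun K hK => ?_).trans (mk_insert_le (a := N))
  obtain ⟨-, hKtop, -, hKT⟩ := hK
  have hNK : N ⊓ K ≠ ⊥ := by
    have := hess _ inf_le_right hKT
    rwa [inf_comm K T, ← inf_assoc, inf_eq_left.mpr hNT] at this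
  have hle : N ≤ K := inf_eq_left.mp ((hN.le_iff.mp inf_le_left).resolve_left hNK)
  rcases hle.eq_or_lt with rfl | hlt
  · exact Set.mem_insert _ _
  · exact Set.mem_insert_of_mem _ ⟨hlt, hKtop.lt_top⟩

lemma graphOrder_le_mk_isCompl_add {T : Submodule R M} (hT : IsCoatom T) :
    graphOrder R M ≤ #{K : Submodule R M | IsCompl T K} + (subdeg T + 1) := by
  refine (mk_le_mk_of_subset fun K hK => ?_).trans
    ((mk_union_le _ _).trans (add_le_add_right (mk_insert_le (a := T)) _))
  obtain ⟨hK0, hKtop⟩ := hK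
  by_cases hdisj : K ⊓ T = ⊥
  · refine Or.inl ⟨disjoint_iff.mpr (inf_comm K T ▸ hdisj), codisjoint_iff.mpr ?_⟩
    refine hT.2 _ (left_lt_sup.mpr fun hKT => hK0 ?_)
    rwa [inf_eq_left.mpr hKT] at hdisj
  rcases eq_or_ne K T with rfl | hKT
  · exact Or.inr (Set.mem_insert _ _)
  · exact Or.inr (Set.mem_insert_of_mem _ ⟨hK0, hKtop, hKT, hdisj⟩)

lemma mk_isCompl_le_graphOrder_add_one {T : Submodule R M} (hT : T ≠ ⊤) :
    #{K : Submodule R M | IsCompl T K} ≤ graphOrder R M + 1 := by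
  refine (mk_le_mk_of_subset fun K hK => ?_).trans (mk_insert_le (a := ⊤))
  rcases eq_or_ne K ⊤ with rfl | hKtop
  · exact Set.mem_insert _ _
  exact Set.mem_insert_of_mem _ ⟨fun hK0 => hT (eq_top_of_isCompl_bot (hK0 ▸ hK)), hKtop⟩

lemma mk_isCompl_eq_graphOrder {T : Submodule R M} (hT : IsCoatom T)
    (hinf : ℵ₀ ≤ graphOrder R M) (hdeg : subdeg T < graphOrder R M) :
    #{K : Submodule R M | IsCompl T K} = graphOrder R M := by
  refine le_antisymm ((mk_isCompl_le_graphOrder_add_one hT.1).trans (add_one_eq hinf).le) ?_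
  by_contra! hlt
  exact (graphOrder_le_mk_isCompl_add hT).not_gt
    (add_lt_of_lt hinf hlt (add_lt_of_lt hinf hdeg (one_lt_aleph0.trans_le hinf)))

noncomputable def retractionEquivLinearMap {S T : Submodule R M} (h : IsCompl S T) :
    {f : M →ₗ[R] T // ∀ x : T, f x = x} ≃ (S →ₗ[R] T) where
  toFun f := f.1 ∘ₗ S.subtype
  invFun g := ⟨LinearMap.ofIsCompl h g LinearMap.id, LinearMap.ofIsCompl_apply_right h⟩
  left_inv f := Subtype.ext <| LinearMap.ofIsCompl_eq' h rfl (LinearMap.ext fun x => (f.2 x).symm)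
  right_inv _ := LinearMap.ext fun _ => LinearMap.ofIsCompl_apply_left h _

noncomputable def isComplEquivLinearMap {S T : Submodule R M} (h : IsCompl S T) :
    {K // IsCompl T K} ≃ (S →ₗ[R] T) :=
  T.isComplEquivProj.trans (retractionEquivLinearMap h)

lemma isComplEquivLinearMap_symm_le {S T N : Submodule R M} (h : IsCompl S T)
    {g : S →ₗ[R] T} (hg : ∀ s, (g s : M) ∈ N) :
    ((isComplEquivLinearMap h).symm g : Submodule R M) ≤ S ⊔ N := by
  intro x hx
  have hx' : x ∈ S ⊔ T := h.sup_eq_top ▸ Submodule.mem_top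
  obtain ⟨s, hs, t, ht, rfl⟩ := Submodule.mem_sup.mp hx'
  have hs' : LinearMap.ofIsCompl h g LinearMap.id s = g ⟨s, hs⟩ :=
    LinearMap.ofIsCompl_apply_left h ⟨s, hs⟩
  have ht' : LinearMap.ofIsCompl h g LinearMap.id t = ⟨t, ht⟩ :=
    LinearMap.ofIsCompl_apply_right h ⟨t, ht⟩
  have hgt : LinearMap.ofIsCompl h g LinearMap.id (s + t) = 0 := LinearMap.mem_ker.mp hx
  rw [map_add, hs', ht'] at hgt
  have : t = -(g ⟨s, hs⟩ : M) := by
    rw [eq_neg_iff_add_eq_zero, add_comm]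
    exact congrArg Subtype.val hgt
  exact Submodule.add_mem_sup hs (this ▸ N.neg_mem (hg _))

end Submodules

section LinearMaps

universe v

variable {R : Type*} [Ring R] {S N : Type v} [AddCommGroup S] [Module R S] [AddCommGroup N]
  [Module R N]

lemma mk_range_le_range_eq_mk_end {f : S →ₗ[R] N} (hf : Function.Injective f) :
    #{g : S →ₗ[R] N | LinearMap.range g ≤ LinearMap.range f} = #(Module.End R S) := by
  let e := LinearEquiv.ofInjective f hf
  let φ : Module.End R S → {g : S →ₗ[R] N | LinearMap.range g ≤ LinearMap.range f} :=
    fun h => ⟨f ∘ₗ h, LinearMap.range_comp_le_range h f⟩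
  have hφ_inj : Function.Injective φ := fun h₁ h₂ h =>
    LinearMap.ext fun x => hf (LinearMap.congr_fun (congrArg Subtype.val h) x)
  have hφ_surj : Function.Surjective φ := fun g =>
    ⟨e.symm.toLinearMap ∘ₗ g.1.codRestrict _ fun x => g.2 (LinearMap.mem_range_self _ x),
      by ext x; simp [φ, e]⟩
  exact (mk_congr (Equiv.ofBijective φ ⟨hφ_inj, hφ_surj⟩)).symm

lemma mk_end_le_mk_linearMap {f : S →ₗ[R] N} (hf : Function.Injective f) :
    #(Module.End R S) ≤ #(S →ₗ[R] N) :=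
  mk_range_le_range_eq_mk_end hf ▸ mk_set_le _

lemma mk_linearMap_le_mk_submodule_mul_mk_end [IsSimpleModule R S] :
    #(S →ₗ[R] N) ≤ #(Submodule R N) * #(Module.End R S) := by
  refine mk_le_mk_mul_of_mk_preimage_le (fun g : S →ₗ[R] N => LinearMap.range g) fun P => ?_
  rcases (LinearMap.range ⁻¹' {P} : Set (S →ₗ[R] N)).eq_empty_or_nonempty with
    h | ⟨f, rfl⟩
  · simp [h]
  rcases f.injective_or_eq_zero with hf | rfl
  · rw [← mk_range_le_range_eq_mk_end hf]
    exact mk_le_mk_of_subset fun g hg => (hg : LinearMap.range g = _).le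
  · have hzero (g : S →ₗ[R] N) (hg : LinearMap.range g = LinearMap.range (0 : S →ₗ[R] N)) :
        g = 0 :=
      LinearMap.range_eq_bot.mp (hg.trans LinearMap.range_zero)
    calc _ ≤ (1 : Cardinal) := mk_le_one_iff_set_subsingleton.mpr
          fun g₁ hg₁ g₂ hg₂ => (hzero g₁ hg₁).trans (hzero g₂ hg₂).symm
      _ ≤ #(Module.End R S) := Cardinal.one_le_iff_ne_zero.mpr (mk_ne_zero _)

end LinearMaps

section Endomorphisms

variable {R : Type*} [Ring R] {M : Type*} [AddCommGroup M] [Module R M]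

lemma mk_submodule_le_subdeg_add_two {T : Submodule R M} (hT : T ≠ ⊤) :
    #(Submodule R T) ≤ subdeg T + 2 := by
  rw [← mk_range_eq _ (Submodule.map_injective_of_injective T.injective_subtype),
    ← one_add_one_eq_two, ← add_assoc]
  refine (mk_le_mk_of_subset ?_).trans
    ((mk_insert_le (a := ⊥)).trans (add_le_add_left (mk_insert_le (a := T)) 1))
  rintro _ ⟨P, rfl⟩
  have hPT : P.map T.subtype ≤ T := Submodule.map_subtype_le T P
  by_cases hP : P.map T.subtype = ⊥
  · exact Or.inl hP
  by_cases hPT' : P.map T.subtype = T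
  · exact Or.inr (Or.inl hPT')
  refine Or.inr (Or.inr ⟨hP, fun h => hT (top_unique (h ▸ hPT)), hPT', ?_⟩)
  rwa [inf_eq_left.mpr hPT]

lemma mk_end_eq_mk_linearMap {S T : Submodule R M} [IsSimpleModule R S] (hT : T ≠ ⊤)
    {f : S →ₗ[R] T} (hf : Function.Injective f) (hinf : ℵ₀ ≤ #(S →ₗ[R] T))
    (hdeg : subdeg T < #(S →ₗ[R] T)) : #(Module.End R S) = #(S →ₗ[R] T) := by
  refine le_antisymm (mk_end_le_mk_linearMap hf) ?_
  by_contra! hlt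
  have hsub : #(Submodule R T) < #(S →ₗ[R] T) :=
    (mk_submodule_le_subdeg_add_two hT).trans_lt
      (add_lt_of_lt hinf hdeg ((ofNat_lt_aleph0 (n := 2)).trans_le hinf))
  exact mk_linearMap_le_mk_submodule_mul_mk_end.not_gt (mul_lt_of_lt hinf hsub hlt)

lemma mk_end_le_subdeg {S S' T K : Submodule R M} (hST : IsCompl S T) (hS'T : S' ≤ T)
    (hS' : S' ≠ ⊥) (e : S ≃ₗ[R] S') (hKT : K ≤ T) (hK : K ≠ ⊥)
    (hS'K : S' ⊓ K = ⊥) :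
    #(Module.End R S) ≤ subdeg T := by
  let C : Module.End R S → Submodule R M := fun h =>
    (isComplEquivLinearMap hST).symm (Submodule.inclusion hS'T ∘ₗ e.toLinearMap ∘ₗ h)
  have hC_le : ∀ h, C h ≤ S ⊔ S' := fun h =>
    isComplEquivLinearMap_symm_le hST fun s => (e (h s)).2
  have hC_inf : ∀ h, C h ⊓ T = ⊥ := fun h =>
    inf_comm T (C h) ▸ ((isComplEquivLinearMap hST).symm _).2.inf_eq_bot
  have hC_inj : Function.Injective C := by
    refine Subtype.val_injective.comp ((isComplEquivLinearMap hST).symm.injective.comp ?_)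
    intro h₁ h₂ h
    ext x
    have hx := congrArg Subtype.val (LinearMap.congr_fun h x)
    exact congrArg Subtype.val (e.injective (Subtype.ext hx))
  have hK_inf : K ⊓ (S ⊔ S') = ⊥ := by
    rw [← inf_eq_left.mpr hKT, inf_assoc, inf_comm T, sup_comm S, sup_inf_assoc_of_le _ hS'T,
      hST.inf_eq_bot, sup_bot_eq, inf_comm, hS'K]
  have hKT' : K ≠ T := fun h => hS' (by rw [← hS'K, h, inf_eq_left.mpr hS'T])
  have hCK_inf : ∀ h, (C h ⊔ K) ⊓ T = K := fun h => by
    rw [sup_comm, sup_inf_assoc_of_le _ hKT, hC_inf, sup_bot_eq]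
  refine mk_le_of_injective (f := fun h => (⟨C h ⊔ K, ?_⟩ :
    {K' : Submodule R M | K' ≠ ⊥ ∧ K' ≠ ⊤ ∧ K' ≠ T ∧ K' ⊓ T ≠ ⊥})) ?_
  · refine ⟨ne_bot_of_le_ne_bot hK le_sup_right, fun htop => hKT' ?_, fun hT => hKT' ?_,
      (hCK_inf h).symm ▸ hK⟩
    · rw [← hCK_inf h, htop, top_inf_eq]
    · rw [← hCK_inf h, hT, inf_idem]
  · intro h₁ h₂ h
    apply hC_inj
    have := congrArg (· ⊓ (S ⊔ S')) (congrArg Subtype.val h)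
    simpa only [sup_inf_assoc_of_le _ (hC_le _), hK_inf, sup_bot_eq] using this

lemma exists_isCompl_mk_linearMap_eq_graphOrder {T : Submodule R M} (hT : IsCoatom T)
    (hinf : ℵ₀ ≤ graphOrder R M) (hdeg : subdeg T < graphOrder R M) :
    ∃ S : Submodule R M, IsCompl S T ∧ IsSimpleModule R S ∧
      #(S →ₗ[R] T) = graphOrder R M := by
  have hcompl := mk_isCompl_eq_graphOrder hT hinf hdeg
  obtain ⟨⟨S, hTS⟩⟩ : Nonempty {K : Submodule R M | IsCompl T K} :=
    mk_ne_zero_iff.mp (hcompl ▸ (aleph0_pos.trans_le hinf).ne')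
  have : IsSimpleModule R (M ⧸ T) := isSimpleModule_iff_isCoatom.mpr hT
  exact ⟨S, hTS.symm, .congr (T.quotientEquivOfIsCompl S hTS).symm,
    (mk_congr (isComplEquivLinearMap hTS.symm)).symm.trans hcompl⟩

end Endomorphisms

/-- Let `T` be a maximal submodule of `M`.  The following are equivalent:
(1) `|G(M)|` is infinite and `deg(T) < |G(M)|`;
(2) (i) there is a simple submodule `S` with `S ⊓ T = ⊥`, `S ⊔ T = ⊤`;
(ii) `T` contains an essential simple submodule `S'` with `S ≅ S'`;
(iii) `|End(S)| = |G(M)|` and this cardinal is infinite;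
(iv) `|G(M/S')| + 1 < |G(M)|`. -/
theorem statement5 {R : Type*} [Ring R] {M : Type*} [AddCommGroup M] [Module R M]
    (T : Submodule R M) (hT : IsCoatom T) :
    (Cardinal.aleph0 ≤ graphOrder R M ∧ subdeg T < graphOrder R M) ↔
    (∃ S S' : Submodule R M,
      (IsSimpleModule R S ∧ S ⊓ T = ⊥ ∧ S ⊔ T = ⊤) ∧
      (S' ≤ T ∧ IsSimpleModule R S' ∧ Nonempty (S ≃ₗ[R] S') ∧
        (∀ K : Submodule R M, K ≤ T → K ≠ ⊥ → S' ⊓ K ≠ ⊥)) ∧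
      (Cardinal.mk (Module.End R S) = graphOrder R M ∧
        Cardinal.aleph0 ≤ graphOrder R M) ∧
      (graphOrder R (M ⧸ S') + 1 < graphOrder R M)) := by
  constructor
  · rintro ⟨hinf, hdeg⟩
    have hone : 1 < graphOrder R M := one_lt_aleph0.trans_le hinf
    obtain ⟨S, hST, hS, hHom⟩ := exists_isCompl_mk_linearMap_eq_graphOrder hT hinf hdeg
    have : Nontrivial (S →ₗ[R] T) := one_lt_iff_nontrivial.mp (hHom ▸ hone)
    obtain ⟨f, hf⟩ := exists_ne (0 : S →ₗ[R] T)
    have hf_inj := f.injective_of_ne_zero hf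
    have hEnd : #(Module.End R S) = graphOrder R M :=
      hHom ▸ mk_end_eq_mk_linearMap hT.1 hf_inj (hHom ▸ hinf) (hHom ▸ hdeg)
    set S' := LinearMap.range (T.subtype ∘ₗ f)
    let e : S ≃ₗ[R] S' := LinearEquiv.ofInjective _ (T.injective_subtype.comp hf_inj)
    have hS'T : S' ≤ T := (LinearMap.range_comp_le_range _ _).trans T.range_subtype.le
    have hS' : IsSimpleModule R S' := .congr e.symm
    have hS'0 : S' ≠ ⊥ := Submodule.nontrivial_iff_ne_bot.mp (IsSimpleModule.nontrivial R S')
    refine ⟨S, S', ⟨hS, hST.inf_eq_bot, hST.sup_eq_top⟩,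
      ⟨hS'T, hS', ⟨e⟩, fun K hKT hK hS'K => ?_⟩, ⟨hEnd, hinf⟩, ?_⟩
    · exact (mk_end_le_subdeg hST hS'T hS'0 e hKT hK hS'K).not_gt (hEnd ▸ hdeg)
    · rw [graphOrder_quotient]
      exact (add_le_add_left (mk_Ioo_le_subdeg_add_one hS'T hS'0) 1).trans_lt
        (add_lt_of_lt hinf (add_lt_of_lt hinf hdeg hone) hone)
  · rintro ⟨S, S', -, ⟨hS'T, hS', -, hess⟩, ⟨-, hinf⟩, hquot⟩
    have hdeg := subdeg_le_mk_Ioo_add_one hS'T (isSimpleModule_iff_isAtom.mp hS') hess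
    exact ⟨hinf, hdeg.trans_lt (graphOrder_quotient S' ▸ hquot)⟩
end

section
/- If a left R-module M contains a nontrivial submodule N whose degree deg(N) in the intersection graph G(M) is finite, then N has only finitely many nontrivial submodules and M has finite length. -/
/-!
Every submodule comparable with `N` other than `⊥`, `⊤` and `N` meets `N` nontrivially, so it is
a neighbour of `N`. Hence the intervals `[⊥, N]` and `[N, ⊤]` of the submodule lattice are finite:
`N` and `M ⧸ N` have finitely many submodules, so both have finite length, and so does `M`.
-/

namespace Submodule

variable {R M : Type*} [Ring R] [AddCommGroup M] [Module R M]

/-- `deg(N)` in the intersection graph is the cardinality of this set. -/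
def intersectionGraphNeighbors (N : Submodule R M) : Set (Submodule R M) :=
  {K | K ≠ ⊥ ∧ K ≠ ⊤ ∧ K ≠ N ∧ K ⊓ N ≠ ⊥}

variable {N : Submodule R M}

theorem Iic_subset_intersectionGraphNeighbors (hN' : N ≠ ⊤) :
    Set.Iic N ⊆ insert ⊥ (insert N N.intersectionGraphNeighbors) := by
  intro K (hK : K ≤ N)
  by_cases hK₀ : K = ⊥
  · exact Or.inl hK₀
  by_cases hKN : K = N
  · exact Or.inr (Or.inl hKN)
  refine Or.inr (Or.inr ⟨hK₀, fun hK₁ ↦ hN' (top_le_iff.mp (hK₁ ▸ hK)), hKN, ?_⟩)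
  rwa [inf_eq_left.mpr hK]

theorem Ici_subset_intersectionGraphNeighbors (hN : N ≠ ⊥) :
    Set.Ici N ⊆ insert ⊤ (insert N N.intersectionGraphNeighbors) := by
  intro K (hK : N ≤ K)
  by_cases hK₁ : K = ⊤
  · exact Or.inl hK₁
  by_cases hKN : K = N
  · exact Or.inr (Or.inl hKN)
  refine Or.inr (Or.inr ⟨fun hK₀ ↦ hN (le_bot_iff.mp (hK₀ ▸ hK)), hK₁, hKN, ?_⟩)
  rwa [inf_eq_right.mpr hK]

theorem finite_submodule_of_finite_intersectionGraphNeighbors (hN' : N ≠ ⊤)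
    (hdeg : N.intersectionGraphNeighbors.Finite) : Finite (Submodule R N) :=
  have : Finite (Set.Iic N) :=
    ((hdeg.insert N).insert ⊥).subset (Iic_subset_intersectionGraphNeighbors hN') |>.to_subtype
  Finite.of_equiv _ N.mapIic.symm.toEquiv

theorem finite_submodule_quotient_of_finite_intersectionGraphNeighbors (hN : N ≠ ⊥)
    (hdeg : N.intersectionGraphNeighbors.Finite) : Finite (Submodule R (M ⧸ N)) :=
  have : Finite (Set.Ici N) :=
    ((hdeg.insert N).insert ⊤).subset (Ici_subset_intersectionGraphNeighbors hN) |>.to_subtype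
  Finite.of_equiv _ (comapMkQRelIso N).symm.toEquiv

end Submodule

section FiniteLength

variable {R M : Type*} [Ring R] [AddCommGroup M] [Module R M]

theorem isFiniteLength_of_finite_submodule [Finite (Submodule R M)] : IsFiniteLength R M :=
  isFiniteLength_iff_isNoetherian_isArtinian.mpr ⟨isNoetherian_iff'.mpr inferInstance, inferInstance⟩

theorem IsFiniteLength.of_submodule_quotient (N : Submodule R M) (hN : IsFiniteLength R N)
    (hMN : IsFiniteLength R (M ⧸ N)) : IsFiniteLength R M := by
  rw [isFiniteLength_iff_isNoetherian_isArtinian] at hN hMN ⊢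
  exact ⟨(isNoetherian_iff_submodule_quotient N).mpr ⟨hN.1, hMN.1⟩,
    (isArtinian_iff_submodule_quotient N).mpr ⟨hN.2, hMN.2⟩⟩

end FiniteLength

/-- If a module `M` contains a nontrivial submodule `N` whose degree in the
intersection graph `G(M)` is finite, then `N` has only finitely many nontrivial submodules
and `M` has finite length. -/
theorem statement7 {R : Type*} [Ring R] {M : Type*} [AddCommGroup M] [Module R M]
    (N : Submodule R M) (hN : N ≠ ⊥) (hN' : N ≠ ⊤)
    (hdeg : {K : Submodule R M | K ≠ ⊥ ∧ K ≠ ⊤ ∧ K ≠ N ∧ K ⊓ N ≠ ⊥}.Finite) :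
    {W : Submodule R N | W ≠ ⊥ ∧ W ≠ ⊤}.Finite ∧ IsFiniteLength R M := by
  have : Finite (Submodule R N) :=
    Submodule.finite_submodule_of_finite_intersectionGraphNeighbors hN' hdeg
  have : Finite (Submodule R (M ⧸ N)) :=
    Submodule.finite_submodule_quotient_of_finite_intersectionGraphNeighbors hN hdeg
  exact ⟨Set.toFinite _, .of_submodule_quotient N isFiniteLength_of_finite_submodule
    isFiniteLength_of_finite_submodule⟩
end

section
/- Let T be a maximal submodule of a left R-module M such that T has only finitely many nontrivial submodules while M has infinitely many nontrivial submodules. Then: (1) T contains a submodule N such that the quotient M/N has infinitely many nontrivial submodules and the degree of T/N in the intersection graph G(M/N) is finite; (2) for this N, the module M/N contains simple submodules S and S' with S ∩ S' = 0, S ≅ S' as R-modules, and End(S) an infinite division ring. -/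
/-!
The map `X ↦ X ⊓ T` sends the infinitely many submodules of `M` into the finite lattice of
submodules of `T`. Take `N` maximal among the values with infinitely many preimages: every
larger value has only finitely many, which is what makes the degree of `T/N` in `G(M/N)` finite,
while the infinitely many `X` with `X ⊓ T = N` become infinitely many complements of the coatom
`T/N` in `M/N`. Each complement is isomorphic to the simple module `(M/N)/(T/N)`. Complements
of `T/N` are told apart by their projections onto `T/N`, whose differences factor through
`(M/N)/(T/N)`, so `Hom((M/N)/(T/N), T/N)` is infinite; as `T/N` has only finitely many
submodules, infinitely many of these maps share a nonzero image, and this makes the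
endomorphism ring of the simple quotient infinite.
-/

open Submodule

theorem exists_infinite_fiber_and_finite_setOf_lt {α β : Type*} [Infinite α] [Preorder β]
    [Finite β] (f : α → β) : ∃ b, (f ⁻¹' {b}).Infinite ∧ {a | b < f a}.Finite := by
  obtain ⟨b₀, hb₀⟩ := Finite.exists_infinite_fiber f
  obtain ⟨b, hb⟩ := Set.Finite.exists_maximal (s := {b | (f ⁻¹' {b}).Infinite}) (Set.toFinite _)
    ⟨b₀, Set.infinite_coe_iff.mp hb₀⟩
  refine ⟨b, hb.prop, ?_⟩
  have hcover : {a | b < f a} ⊆ ⋃ c ∈ {c | b < c}, f ⁻¹' {c} := fun a ha =>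
    Set.mem_biUnion (x := f a) ha rfl
  refine (Set.Finite.biUnion (Set.toFinite _) fun c hc => ?_).subset hcover
  exact Set.not_infinite.mp fun hinf => hb.not_gt hinf hc

theorem exists_infinite_setOf_inf_eq_and_finite_setOf_lt_inf {α : Type*} [Lattice α] [Infinite α]
    (t : α) [Finite (Set.Iic t)] :
    ∃ n ≤ t, {x | x ⊓ t = n}.Infinite ∧ {x | n < x ⊓ t}.Finite := by
  obtain ⟨⟨n, hn⟩, hfiber, habove⟩ :=
    exists_infinite_fiber_and_finite_setOf_lt fun x : α => (⟨x ⊓ t, inf_le_right⟩ : Set.Iic t)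
  exact ⟨n, hn, hfiber.mono fun x hx => show x ⊓ t = n from congrArg Subtype.val hx, habove⟩

theorem Set.finite_setOf_ne_bot_and_ne_top_iff {α : Type*} [Bot α] [Top α] :
    {a : α | a ≠ ⊥ ∧ a ≠ ⊤}.Finite ↔ Finite α := by
  rw [← Set.finite_univ_iff]
  refine ⟨fun h => (h.union (Set.toFinite {⊥, ⊤})).subset fun a _ => ?_,
    fun h => h.subset (Set.subset_univ _)⟩
  by_cases h₁ : a = ⊥ <;> by_cases h₂ : a = ⊤ <;> simp [h₁, h₂]

theorem IsCoatom.isCompl_of_disjoint {α : Type*} [Lattice α] [BoundedOrder α] {a b : α}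
    (ha : IsCoatom a) (hab : Disjoint a b) (hb : b ≠ ⊥) : IsCompl a b :=
  ⟨hab, ha.not_le_iff_codisjoint.mp fun hle => hb (hab.eq_bot_of_ge hle)⟩

theorem IsCoatom.infinite_setOf_isCompl {α : Type*} [Lattice α] [BoundedOrder α] {a : α}
    (ha : IsCoatom a) (h : {b | Disjoint b a}.Infinite) : {b | IsCompl a b}.Infinite :=
  (h.sdiff (Set.finite_singleton ⊥)).mono fun _ hb => ha.isCompl_of_disjoint hb.1.symm hb.2

section Ring

variable {R : Type*} [Ring R]

theorem finite_submodule_of_surjective {M M₂ : Type*} [AddCommGroup M] [Module R M]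
    [AddCommGroup M₂] [Module R M₂] [Finite (Submodule R M)] {f : M →ₗ[R] M₂}
    (hf : Function.Surjective f) : Finite (Submodule R M₂) :=
  Finite.of_injective _ (comap_injective_of_surjective hf)

section Quotient

variable {M : Type*} [AddCommGroup M] [Module R M] {N T : Submodule R M}

theorem Submodule.comap_mkQ_inf_eq_comap_inf_map (hNT : N ≤ T) (K : Submodule R (M ⧸ N)) :
    comap N.mkQ K ⊓ T = comap N.mkQ (K ⊓ T.map N.mkQ) := by
  rw [comap_inf, comap_map_mkQ, sup_eq_right.mpr hNT]

theorem Submodule.disjoint_map_mkQ_iff (hNT : N ≤ T) {K : Submodule R (M ⧸ N)} :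
    Disjoint K (T.map N.mkQ) ↔ comap N.mkQ K ⊓ T = N := by
  rw [disjoint_iff, comap_mkQ_inf_eq_comap_inf_map hNT,
    ← (comap_injective_of_surjective N.mkQ_surjective).eq_iff (b := ⊥), comap_bot, ker_mkQ]

theorem Submodule.infinite_setOf_disjoint_map_mkQ (hNT : N ≤ T)
    (h : {X : Submodule R M | X ⊓ T = N}.Infinite) :
    {K : Submodule R (M ⧸ N) | Disjoint K (T.map N.mkQ)}.Infinite := by
  refine Set.Infinite.of_image (comap N.mkQ) (h.mono fun X (hX : X ⊓ T = N) => ?_)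
  have hX' : comap N.mkQ (X.map N.mkQ) = X := by
    rw [comap_map_mkQ, sup_eq_right.mpr (hX ▸ inf_le_left)]
  exact ⟨X.map N.mkQ, (disjoint_map_mkQ_iff hNT).mpr (hX'.symm ▸ hX), hX'⟩

theorem Submodule.finite_setOf_not_disjoint_map_mkQ (hNT : N ≤ T)
    (h : {X : Submodule R M | N < X ⊓ T}.Finite) :
    {K : Submodule R (M ⧸ N) | ¬Disjoint K (T.map N.mkQ)}.Finite := by
  refine (h.preimage (comap_injective_of_surjective N.mkQ_surjective).injOn).subset fun K hK => ?_
  refine lt_of_le_of_ne ?_ (Ne.symm (mt (disjoint_map_mkQ_iff hNT).mpr hK))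
  rw [comap_mkQ_inf_eq_comap_inf_map hNT]
  exact (ker_mkQ N).symm.trans_le (LinearMap.ker_le_comap _)

end Quotient

theorem infinite_linearMap_quotient_of_infinite_isCompl {Q : Type*} [AddCommGroup Q] [Module R Q]
    {p : Submodule R Q} (h : {q | IsCompl p q}.Infinite) : Infinite (Q ⧸ p →ₗ[R] p) := by
  obtain ⟨q₀, h₀⟩ := h.nonempty
  have : Infinite {q // IsCompl p q} := h.to_subtype
  let φ (q : {q // IsCompl p q}) : Q ⧸ p →ₗ[R] p :=
    p.liftQ (p.projectionOnto q q.2 - p.projectionOnto q₀ h₀) fun x hx => by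
      simp [projectionOnto_apply_of_mem_left _ hx]
  refine Infinite.of_injective φ fun q q' hqq' => Subtype.ext ?_
  have := congrArg (· ∘ₗ p.mkQ) hqq'
  simp only [φ, liftQ_mkQ, sub_left_inj] at this
  rw [← ker_projectionOnto q.2, ← ker_projectionOnto q'.2, this]

theorem infinite_end_of_infinite_linearMap {S P : Type*} [AddCommGroup S] [Module R S]
    [AddCommGroup P] [Module R P] [IsSimpleModule R S] [Finite (Submodule R P)]
    [Infinite (S →ₗ[R] P)] : Infinite (Module.End R S) := by
  obtain ⟨U, hU⟩ := Finite.exists_infinite_fiber (LinearMap.range : (S →ₗ[R] P) → Submodule R P)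
  obtain ⟨f₀, hf₀U : LinearMap.range f₀ = U, hf₀ : f₀ ≠ 0⟩ :=
    ((Set.infinite_coe_iff.mp hU).sdiff (Set.finite_singleton 0)).nonempty
  let e : S ≃ₗ[R] U := (LinearEquiv.ofInjective f₀ (LinearMap.injective_of_ne_zero hf₀)).trans
    (LinearEquiv.ofEq _ _ hf₀U)
  refine Infinite.of_injective (fun f : LinearMap.range ⁻¹' {U} => e.symm.toLinearMap ∘ₗ
    f.1.codRestrict U fun x => le_of_eq f.2 (LinearMap.mem_range_self f.1 x)) ?_
  intro f g hfg
  ext x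
  simpa using congrArg Subtype.val (e.symm.injective (LinearMap.congr_fun hfg x))

theorem Module.End.isUnit_of_ne_zero {S : Type*} [AddCommGroup S] [Module R S]
    [IsSimpleModule R S] {f : Module.End R S} (hf : f ≠ 0) : IsUnit f :=
  (Module.End.isUnit_iff f).mpr (LinearMap.bijective_of_ne_zero hf)

theorem IsCoatom.isSimpleModule_of_isCompl {Q : Type*} [AddCommGroup Q] [Module R Q]
    {p q : Submodule R Q} (hp : IsCoatom p) (h : IsCompl p q) : IsSimpleModule R q :=
  have := isSimpleModule_iff_isCoatom.mpr hp
  .congr (quotientEquivOfIsCompl p q h).symm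

theorem IsCoatom.exists_simple_isCompl_pair {Q : Type*} [AddCommGroup Q] [Module R Q]
    {p : Submodule R Q} (hp : IsCoatom p) [Finite (Submodule R p)]
    (h : {q | IsCompl p q}.Infinite) :
    ∃ S S' : Submodule R Q,
      IsSimpleModule R S ∧ IsSimpleModule R S' ∧ S ⊓ S' = ⊥ ∧
      Nonempty (S ≃ₗ[R] S') ∧
      Infinite (Module.End R S) ∧
      (∀ f : Module.End R S, f ≠ 0 → IsUnit f) := by
  obtain ⟨S, hS : IsCompl p S⟩ := h.nonempty
  obtain ⟨S', hS' : IsCompl p S', hne⟩ := (h.sdiff (Set.finite_singleton S)).nonempty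
  have hSs := hp.isSimpleModule_of_isCompl hS
  have hS's := hp.isSimpleModule_of_isCompl hS'
  let e := quotientEquivOfIsCompl p S hS
  have := isSimpleModule_iff_isCoatom.mpr hp
  have := infinite_linearMap_quotient_of_infinite_isCompl h
  have := infinite_end_of_infinite_linearMap (R := R) (S := Q ⧸ p) (P := p)
  refine ⟨S, S', hSs, hS's, ?_, ⟨e.symm.trans (quotientEquivOfIsCompl p S' hS')⟩,
    .of_injective _ e.conjRingEquiv.injective, fun f hf => Module.End.isUnit_of_ne_zero hf⟩
  exact ((isSimpleModule_iff_isAtom.mp hSs).disjoint_of_ne (isSimpleModule_iff_isAtom.mp hS's)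
    (Ne.symm (Set.mem_singleton_iff.not.mp hne))).eq_bot

end Ring

/-- Let `T` be a maximal submodule of `M` such that `T` has only finitely many
nontrivial submodules while `M` has infinitely many.  Then (1) `T` contains a submodule `N`
such that `M/N` has infinitely many nontrivial submodules and the degree of `T/N` in
`G(M/N)` is finite; and (2) `M/N` contains simple submodules `S`, `S'` with `S ⊓ S' = ⊥`,
`S ≅ S'`, and `End(S)` an infinite division ring. -/
theorem statement8 {R : Type*} [Ring R] {M : Type*} [AddCommGroup M] [Module R M]
    (T : Submodule R M) (hT : IsCoatom T)
    (hTfin : {W : Submodule R T | W ≠ ⊥ ∧ W ≠ ⊤}.Finite)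
    (hMinf : {N : Submodule R M | N ≠ ⊥ ∧ N ≠ ⊤}.Infinite) :
    ∃ N : Submodule R M, N ≤ T ∧
      {W : Submodule R (M ⧸ N) | W ≠ ⊥ ∧ W ≠ ⊤}.Infinite ∧
      {K : Submodule R (M ⧸ N) | K ≠ ⊥ ∧ K ≠ ⊤ ∧ K ≠ T.map N.mkQ ∧
        K ⊓ T.map N.mkQ ≠ ⊥}.Finite ∧
      ∃ S S' : Submodule R (M ⧸ N),
        IsSimpleModule R S ∧ IsSimpleModule R S' ∧ S ⊓ S' = ⊥ ∧
        Nonempty (S ≃ₗ[R] S') ∧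
        Infinite (Module.End R S) ∧
        (∀ f : Module.End R S, f ≠ 0 → IsUnit f) := by
  have : Finite (Submodule R T) := Set.finite_setOf_ne_bot_and_ne_top_iff.mp hTfin
  have : Infinite (Submodule R M) :=
    not_finite_iff_infinite.mp (mt Set.finite_setOf_ne_bot_and_ne_top_iff.mpr hMinf)
  have : Finite (Set.Iic T) := .of_equiv _ (mapIic T).toEquiv
  obtain ⟨N, hNT, hfiber, habove⟩ := exists_infinite_setOf_inf_eq_and_finite_setOf_lt_inf T
  have hTN : IsCoatom (T.map N.mkQ) :=
    isCoatom_map_of_ker_le N.mkQ_surjective (by rwa [ker_mkQ]) hT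
  have : Finite (Submodule R (T.map N.mkQ)) :=
    finite_submodule_of_surjective (N.mkQ.submoduleMap_surjective T)
  have hcompl := hTN.infinite_setOf_isCompl (infinite_setOf_disjoint_map_mkQ hNT hfiber)
  refine ⟨N, hNT, ?_, ?_, hTN.exists_simple_isCompl_pair hcompl⟩
  · exact (hcompl.sdiff (Set.toFinite {⊥, ⊤})).mono fun K hK => by simpa [not_or] using hK.2
  · exact (finite_setOf_not_disjoint_map_mkQ hNT habove).subset fun K hK =>
      mt disjoint_iff.mp hK.2.2.2
end

section
/- Let M be a left R-module of finite length. Then M has infinitely many nontrivial submodules if and only if there exists a submodule K of M and simple submodules S, S' of the quotient module M/K such that S ∩ S' = 0, S ≅ S' as R-modules, and the endomorphism ring End(S) is an infinite division ring. -/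
/-!
Pick `A` maximal among the submodules with infinitely many submodules above them (it exists
because `M` is Noetherian). In the Artinian quotient `M ⧸ A` every nonzero submodule has only
finitely many submodules above it, yet there are infinitely many submodules; hence there are
infinitely many atoms, and for a fixed atom `S'` infinitely many atoms `T` share the same join
`B = T ⊔ S'`. All of them are complements of `S'` in `B`, and complements of `S'` correspond to
projections onto `S'`, which are determined by their restriction to a fixed complement `S`. So
`Hom(S, S')` is infinite, and Schur's lemma gives `S ≅ S'` with `End(S)` infinite.

Conversely, graphs of the maps `S → S'` are pairwise distinct submodules of `S ⊕ S' ≤ M ⧸ K`,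
and `End(S) ≅ Hom(S, S')` is infinite.
-/

open Submodule

theorem infinite_setOf_ne_bot_and_ne_top_iff {α : Type*} [PartialOrder α] [BoundedOrder α] :
    {a : α | a ≠ ⊥ ∧ a ≠ ⊤}.Infinite ↔ Infinite α :=
  ⟨fun h => Set.infinite_univ_iff.mp (h.mono (Set.subset_univ _)), fun _ =>
    (Set.infinite_univ.sdiff (Set.toFinite {⊥, ⊤})).mono fun a ha => by simpa [not_or] using ha.2⟩

theorem exists_infinite_Ici_forall_lt_finite_Ici {α : Type*} [PartialOrder α] [WellFoundedGT α]
    {a₀ : α} (h : (Set.Ici a₀).Infinite) :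
    ∃ a : α, (Set.Ici a).Infinite ∧ ∀ b, a < b → (Set.Ici b).Finite := by
  obtain ⟨a, ha, hmax⟩ := wellFounded_gt.has_min {a : α | (Set.Ici a).Infinite} ⟨a₀, h⟩
  exact ⟨a, ha, fun b hab => Set.not_infinite.mp fun hb => hmax b hb hab⟩

theorem exists_isAtom_infinite_setOf_isAtom_sup_eq {α : Type*} [Lattice α] [OrderBot α]
    [IsAtomic α] [Infinite α] (hfin : ∀ a : α, a ≠ ⊥ → (Set.Ici a).Finite) :
    ∃ a b : α, IsAtom a ∧ {t | IsAtom t ∧ t ≠ a ∧ t ⊔ a = b}.Infinite := by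
  have hatoms : {t : α | IsAtom t}.Infinite := by
    intro hatoms
    refine Set.infinite_univ (((Set.finite_singleton ⊥).union
      (hatoms.biUnion fun t ht => hfin t ht.1)).subset fun x _ => ?_)
    obtain rfl | ⟨t, ht, htx⟩ := eq_bot_or_exists_atom_le x
    · exact Or.inl rfl
    · exact Or.inr (Set.mem_biUnion ht htx)
  obtain ⟨a, ha⟩ := hatoms.nonempty
  by_contra! hfib
  refine (hatoms.sdiff (Set.finite_singleton a)) (((hfin a ha.1).biUnion fun b _ =>
    hfib a b ha).subset fun t ht => ?_)
  exact Set.mem_biUnion (le_sup_right : a ≤ t ⊔ a) ⟨ht.1, ht.2, rfl⟩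

namespace Submodule

variable {R E : Type*} [Ring R] [AddCommGroup E] [Module R E]

theorem isCompl_comap_subtype_of_disjoint_of_sup_eq {p q B : Submodule R E} (hpq : Disjoint p q)
    (hB : p ⊔ q = B) : IsCompl (comap B.subtype p) (comap B.subtype q) := by
  constructor
  · rw [disjoint_iff, ← comap_inf, hpq.eq_bot, comap_bot, ker_subtype]
  · rw [codisjoint_iff]
    apply map_injective_of_injective B.injective_subtype
    rw [map_sup, map_comap_subtype, map_comap_subtype, map_subtype_top,
      inf_eq_right.mpr (le_sup_left.trans_eq hB), inf_eq_right.mpr (le_sup_right.trans_eq hB), hB]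

/-- Complements of `p` correspond to projections onto `p`, and such a projection is determined
by its restriction to one fixed complement `q₀`. -/
theorem infinite_linearMap_of_infinite_setOf_isCompl {p q₀ : Submodule R E} (h₀ : IsCompl p q₀)
    (h : {q | IsCompl p q}.Infinite) : Infinite (q₀ →ₗ[R] p) := by
  have : Infinite {q // IsCompl p q} := h.to_subtype
  have hproj (f : {f : E →ₗ[R] p // ∀ x : p, f x = x}) :
      LinearMap.ofIsCompl h₀ LinearMap.id ((f : E →ₗ[R] p) ∘ₗ q₀.subtype) = f :=
    LinearMap.ofIsCompl_eq h₀ (fun x => (f.2 x).symm) fun _ => rfl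
  refine Infinite.of_injective (fun q => (p.isComplEquivProj q : E →ₗ[R] p) ∘ₗ q₀.subtype)
    fun q q' hqq' => p.isComplEquivProj.injective (Subtype.ext ?_)
  rw [← hproj, ← hproj (p.isComplEquivProj q')]
  exact congrArg _ hqq'

theorem exists_isAtom_ne_infinite_linearMap [IsArtinian R E] [Infinite (Submodule R E)]
    (hfin : ∀ P : Submodule R E, P ≠ ⊥ → (Set.Ici P).Finite) :
    ∃ S S' : Submodule R E, IsAtom S ∧ IsAtom S' ∧ S ≠ S' ∧ Infinite (S →ₗ[R] S') := by
  have : IsAtomic (Submodule R E) := isAtomic_of_orderBot_wellFounded_lt wellFounded_lt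
  obtain ⟨S', B, hS', hatoms⟩ := exists_isAtom_infinite_setOf_isAtom_sup_eq hfin
  set 𝒜 := {T | IsAtom T ∧ T ≠ S' ∧ T ⊔ S' = B}
  have hle {T} (hT : T ∈ 𝒜) : T ≤ B := le_sup_left.trans_eq hT.2.2
  have hcompl {T} (hT : T ∈ 𝒜) :
      IsCompl (comap B.subtype S') (comap B.subtype T) :=
    isCompl_comap_subtype_of_disjoint_of_sup_eq (hS'.disjoint_of_ne hT.1 hT.2.1.symm)
      (sup_comm S' T ▸ hT.2.2)
  have hinj : Set.InjOn (comap B.subtype) 𝒜 :=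
    fun T hT T' hT' h => by
      rw [← inf_eq_right.mpr (hle hT), ← inf_eq_right.mpr (hle hT'), ← map_comap_subtype,
        ← map_comap_subtype, h]
  obtain ⟨S, hS⟩ := hatoms.nonempty
  have := infinite_linearMap_of_infinite_setOf_isCompl (hcompl hS)
    ((hatoms.image hinj).mono (Set.image_subset_iff.mpr fun T hT => hcompl hT))
  have hS'B : S' ≤ B := le_sup_right.trans_eq hS.2.2
  exact ⟨S, S', hS.1, hS', hS.2.1, (LinearEquiv.arrowCongrAddEquiv
    (comapSubtypeEquivOfLe (hle hS)) (comapSubtypeEquivOfLe hS'B)).toEquiv.infinite_iff.mp this⟩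

theorem infinite_of_disjoint_of_infinite_linearMap {p q : Submodule R E} (hpq : Disjoint p q)
    [Infinite (p →ₗ[R] q)] : Infinite (Submodule R E) := by
  have hφ : Function.Injective (p.subtype.coprod q.subtype) := by
    rw [← LinearMap.ker_eq_bot, LinearMap.ker_coprod_of_disjoint_range _ _
      (by rwa [range_subtype, range_subtype]), ker_subtype, ker_subtype, prod_bot]
  have hgraph : Function.Injective (LinearMap.graph : (p →ₗ[R] q) → Submodule R (p × q)) :=
    fun f g h => LinearMap.ext fun x => (h ▸ rfl : (x, f x) ∈ g.graph)
  exact Infinite.of_injective _ ((map_injective_of_injective hφ).comp hgraph)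

variable {M : Type*} [AddCommGroup M] [Module R M]

theorem infinite_of_infinite_quotient (K : Submodule R M) [Infinite (Submodule R (M ⧸ K))] :
    Infinite (Submodule R M) :=
  Infinite.of_injective _ (comap_injective_of_surjective K.mkQ_surjective)

theorem exists_infinite_quotient_forall_finite_Ici [IsNoetherian R M] [Infinite (Submodule R M)] :
    ∃ A : Submodule R M, Infinite (Submodule R (M ⧸ A)) ∧
      ∀ P : Submodule R (M ⧸ A), P ≠ ⊥ → (Set.Ici P).Finite := by
  obtain ⟨A, hA, hmax⟩ := exists_infinite_Ici_forall_lt_finite_Ici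
    (by rw [Set.Ici_bot]; exact Set.infinite_univ : (Set.Ici (⊥ : Submodule R M)).Infinite)
  let e := comapMkQRelIso A
  refine ⟨A, e.toEquiv.infinite_iff.mpr hA.to_subtype, fun P hP => ?_⟩
  have hlt : ⊥ < e P := by
    simpa using e.lt_iff_lt.mpr (bot_lt_iff_ne_bot.mpr hP)
  exact (hmax _ hlt).of_injOn (fun X hX => e.monotone hX)
    (Subtype.val_injective.comp e.injective).injOn

end Submodule

theorem nonempty_linearEquiv_and_infinite_end_of_infinite_linearMap {R S S' : Type*} [Ring R]
    [AddCommGroup S] [Module R S] [AddCommGroup S'] [Module R S'] [IsSimpleModule R S]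
    [IsSimpleModule R S'] [Infinite (S →ₗ[R] S')] :
    Nonempty (S ≃ₗ[R] S') ∧ Infinite (Module.End R S) := by
  obtain ⟨f, hf⟩ := exists_ne (0 : S →ₗ[R] S')
  let e := LinearEquiv.ofBijective f (LinearMap.bijective_of_ne_zero hf)
  exact ⟨⟨e⟩, (LinearEquiv.arrowCongrAddEquiv (LinearEquiv.refl R S) e).toEquiv.infinite_iff.mpr
    inferInstance⟩

/-- Let `M` be a module of finite length.  Then `M` has infinitely many
nontrivial submodules if and only if there exist a submodule `K` of `M` and simple
submodules `S`, `S'` of `M/K` with `S ⊓ S' = ⊥`, `S ≅ S'`, and `End(S)` an infinite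
division ring. -/
theorem statement9 {R : Type*} [Ring R] {M : Type*} [AddCommGroup M] [Module R M]
    (hlen : IsFiniteLength R M) :
    {N : Submodule R M | N ≠ ⊥ ∧ N ≠ ⊤}.Infinite ↔
    ∃ K : Submodule R M, ∃ S S' : Submodule R (M ⧸ K),
      IsSimpleModule R S ∧ IsSimpleModule R S' ∧ S ⊓ S' = ⊥ ∧
      Nonempty (S ≃ₗ[R] S') ∧
      Infinite (Module.End R S) ∧
      (∀ f : Module.End R S, f ≠ 0 → IsUnit f) := by
  obtain ⟨_, _⟩ := isFiniteLength_iff_isNoetherian_isArtinian.mp hlen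
  rw [infinite_setOf_ne_bot_and_ne_top_iff]
  constructor
  · intro
    obtain ⟨K, _, hfin⟩ := exists_infinite_quotient_forall_finite_Ici (R := R) (M := M)
    obtain ⟨S, S', hS, hS', hne, _⟩ := exists_isAtom_ne_infinite_linearMap hfin
    have hSsimple := isSimpleModule_iff_isAtom.mpr hS
    have hS'simple := isSimpleModule_iff_isAtom.mpr hS'
    obtain ⟨hiso, hend⟩ := nonempty_linearEquiv_and_infinite_end_of_infinite_linearMap
      (R := R) (S := S) (S' := S')
    exact ⟨K, S, S', hSsimple, hS'simple, (hS.disjoint_of_ne hS' hne).eq_bot, hiso, hend,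
      fun f hf => (Module.End.isUnit_iff f).mpr (LinearMap.bijective_of_ne_zero hf)⟩
  · rintro ⟨K, S, S', -, -, hSS', ⟨e⟩, _, -⟩
    have : Infinite (S →ₗ[R] S') :=
      (LinearEquiv.arrowCongrAddEquiv (LinearEquiv.refl R S) e).toEquiv.infinite_iff.mp ‹_›
    have := infinite_of_disjoint_of_infinite_linearMap (disjoint_iff.mpr hSS')
    exact infinite_of_infinite_quotient K
end

section
/- Let N be a nontrivial submodule of a left R-module M. The following conditions are equivalent: (1) M has infinitely many nontrivial submodules and deg(N) is finite; (2) all of the following hold: (i) N contains a unique simple submodule S; (ii) End(S) is infinite; (iii) the quotient module M/S has only finitely many nontrivial submodules; (iv) there exist submodules B ⊆ A of M such that N ∩ A = 0 and A/B ≅ S as R-modules. -/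
/-!
Let `F` be the set of submodules meeting `N`; `deg N` is finite iff `F` is. If `F` is finite it
contains every submodule above a nonzero `U ≤ N`, so `N` has an atom `S` and only finitely many
submodules contain `S`. The infinitely many `K` with `K ⊓ N = ⊥` then take finitely many values
`K ⊔ S`; in an infinite fibre over `K₀ ⊔ S` the `K` are complements of `S`, i.e. graphs of maps
`K₀ → S`, so `Hom(K₀, S)` is infinite. As `K₀` embeds in the interval above `S`, it has finitely
many submodules, hence maps `K₀ → S` have finitely many kernels; since a map onto a simple module
is determined by its kernel up to `End S`, the ring `End S` is infinite. Pigeonholing on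
`(K ⊔ S, K ⊔ U)` instead shows that `S` is the only atom below `N`.

Conversely, every nonzero submodule of `N` then contains `S`, so `F` lies in the finite interval
above `S`, while the graphs of `g ∘ π` for `g : End S` and the surjection `π : A → S` are
infinitely many distinct submodules missing `N`.
-/

open Set Function

section Order

variable {α : Type*}

theorem Set.Infinite.exists_infinite_fiber {β : Type*} {s : Set α} {t : Set β} {f : α → β}
    (hs : s.Infinite) (hf : MapsTo f s t) (ht : t.Finite) : ∃ b, (s ∩ f ⁻¹' {b}).Infinite := by
  by_contra! h
  exact hs ((ht.biUnion fun b _ => h b).subset fun a ha => mem_biUnion (hf ha) ⟨ha, rfl⟩)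

theorem finite_setOf_ne_bot_ne_top_iff [PartialOrder α] [BoundedOrder α] :
    {x : α | x ≠ ⊥ ∧ x ≠ ⊤}.Finite ↔ Finite α := by
  refine ⟨fun h => finite_univ_iff.mp (((h.insert ⊤).insert ⊥).subset fun x _ => ?_),
    fun _ => toFinite _⟩
  by_cases hb : x = ⊥
  · exact .inl hb
  by_cases ht : x = ⊤
  · exact .inr (.inl ht)
  · exact .inr (.inr ⟨hb, ht⟩)

theorem exists_isAtom_le_of_finite_Iic [PartialOrder α] [OrderBot α] {p : α} (hp : p ≠ ⊥)
    (h : (Iic p).Finite) : ∃ a, IsAtom a ∧ a ≤ p := by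
  obtain ⟨a, ⟨ha, hap⟩, hmin⟩ :=
    (h.subset fun x hx => hx.2 : {x | x ≠ ⊥ ∧ x ≤ p}.Finite).exists_minimal ⟨p, hp, le_rfl⟩
  refine ⟨a, ⟨ha, fun b hb => ?_⟩, hap⟩
  by_contra hb0
  exact hb.not_ge (hmin ⟨hb0, hb.le.trans hap⟩ hb.le)

section Bounded

variable [Lattice α] [BoundedOrder α] {n : α}

theorem finite_setOf_inf_ne_bot_of_finite
    (h : {k : α | k ≠ ⊥ ∧ k ≠ ⊤ ∧ k ≠ n ∧ k ⊓ n ≠ ⊥}.Finite) : {k : α | k ⊓ n ≠ ⊥}.Finite := by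
  refine ((h.insert n).insert ⊤).subset fun k (hk : k ⊓ n ≠ ⊥) => ?_
  by_cases ht : k = ⊤
  · exact .inl ht
  by_cases hkn : k = n
  · exact .inr (.inl hkn)
  · exact .inr (.inr ⟨fun hb => hk (by simp [hb]), ht, hkn, hk⟩)

theorem infinite_setOf_inf_eq_bot (hV : {k : α | k ≠ ⊥ ∧ k ≠ ⊤}.Infinite)
    (hF : {k : α | k ⊓ n ≠ ⊥}.Finite) : {k : α | k ⊓ n = ⊥}.Infinite :=
  fun hW => hV ((hW.union hF).subset fun _ _ => em _)

theorem Ici_subset_setOf_inf_ne_bot {u : α} (hu : u ≠ ⊥) (hun : u ≤ n) :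
    Ici u ⊆ {k | k ⊓ n ≠ ⊥} :=
  fun _ hk h => hu (le_bot_iff.mp (h ▸ le_inf hk hun))

theorem finite_Iic_of_finite_setOf_inf_ne_bot (hF : {k : α | k ⊓ n ≠ ⊥}.Finite) :
    (Iic n).Finite :=
  (hF.insert ⊥).subset fun k (hk : k ≤ n) => by
    by_cases hb : k = ⊥
    · exact .inl hb
    · exact .inr (show k ⊓ n ≠ ⊥ by rwa [inf_eq_left.mpr hk])

end Bounded

section Modular

variable [Lattice α] [IsModularLattice α]

section OrderBot

variable [OrderBot α]

theorem sup_injOn_Iic_of_inf_eq_bot {p s : α} (h : p ⊓ s = ⊥) : InjOn (· ⊔ s) (Iic p) := by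
  have key : ∀ x ≤ p, (x ⊔ s) ⊓ p = x := fun x hx => by
    rw [sup_inf_assoc_of_le s hx, inf_comm, h, sup_bot_eq]
  intro x hx y hy hxy
  rw [← key x hx, ← key y hy]
  exact congrArg (· ⊓ p) hxy

theorem finite_Iic_of_inf_eq_bot {p s : α} (h : p ⊓ s = ⊥) (hs : (Ici s).Finite) :
    (Iic p).Finite :=
  hs.of_injOn (fun _ _ => le_sup_right) (sup_injOn_Iic_of_inf_eq_bot h)

theorem IsAtom.le_of_forall_isAtom_eq {s n p : α} (hs : IsAtom s) (hfin : (Ici s).Finite)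
    (huniq : ∀ u ≤ n, IsAtom u → u = s) (hpn : p ≤ n) (hp : p ≠ ⊥) : s ≤ p := by
  refine inf_eq_left.mp ((hs.le_iff.mp inf_le_left).resolve_left fun hsp => ?_)
  obtain ⟨u, hu, hup⟩ :=
    exists_isAtom_le_of_finite_Iic hp (finite_Iic_of_inf_eq_bot (inf_comm s p ▸ hsp) hfin)
  obtain rfl := huniq u (hup.trans hpn) hu
  exact hs.1 (hsp ▸ (inf_eq_left.mpr hup).symm)

/-- The meet `(k₀ ⊔ s) ⊓ (k₀ ⊔ u)` either misses `s`, and then equals both `k₀` and `k₁`, or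
contains `s`, and then `s ≤ (k₀ ⊔ u) ⊓ n = u`. -/
theorem IsAtom.eq_of_sup_eq_of_sup_eq {n s u k₀ k₁ : α} (hs : IsAtom s) (hu : IsAtom u)
    (hsn : s ≤ n) (hun : u ≤ n) (hk₀ : k₀ ⊓ n = ⊥) (hks : k₀ ⊔ s = k₁ ⊔ s)
    (hku : k₀ ⊔ u = k₁ ⊔ u) (hne : k₀ ≠ k₁) : s = u := by
  set t := (k₀ ⊔ s) ⊓ (k₀ ⊔ u)
  rcases hs.le_iff.mp (inf_le_left : s ⊓ t ≤ s) with hst | hst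
  · have eq_t : ∀ k, k ≤ t → t ≤ k ⊔ s → k = t := fun k hkt htk => by
      rw [← inf_eq_right.mpr htk, sup_inf_assoc_of_le s hkt, hst, sup_bot_eq]
    refine absurd ((eq_t k₀ (le_inf le_sup_left le_sup_left) inf_le_left).trans
      (eq_t k₁ (le_inf (hks ▸ le_sup_left) (hku ▸ le_sup_left)) (hks ▸ inf_le_left)).symm) hne
  · have hsu : s ≤ (u ⊔ k₀) ⊓ n :=
      le_inf ((inf_eq_left.mp hst).trans (sup_comm k₀ u ▸ inf_le_right)) hsn
    rw [sup_inf_assoc_of_le k₀ hun, hk₀, sup_bot_eq] at hsu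
    exact (hu.le_iff.mp hsu).resolve_left hs.1

end OrderBot

theorem IsAtom.eq_of_infinite_setOf_inf_eq_bot [BoundedOrder α] {n s u : α} (hs : IsAtom s)
    (hu : IsAtom u) (hsn : s ≤ n) (hun : u ≤ n) (hW : {k : α | k ⊓ n = ⊥}.Infinite)
    (hF : {k : α | k ⊓ n ≠ ⊥}.Finite) : u = s := by
  obtain ⟨k₀, hk₀, k₁, -, hne, heq⟩ := hW.exists_ne_map_eq_of_mapsTo
    (f := fun k => (k ⊔ s, k ⊔ u)) (t := {k | k ⊓ n ≠ ⊥} ×ˢ {k | k ⊓ n ≠ ⊥})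
    (fun k _ => ⟨Ici_subset_setOf_inf_ne_bot hs.1 hsn (show s ≤ k ⊔ s from le_sup_right),
      Ici_subset_setOf_inf_ne_bot hu.1 hun (show u ≤ k ⊔ u from le_sup_right)⟩) (hF.prod hF)
  exact (hs.eq_of_sup_eq_of_sup_eq hu hsn hun hk₀ (Prod.ext_iff.mp heq).1
    (Prod.ext_iff.mp heq).2 hne).symm

end Modular

end Order

namespace Submodule

variable {R M : Type*} [Ring R] [AddCommGroup M] [Module R M]

theorem finite_Ici_iff {S : Submodule R M} : (Ici S).Finite ↔ Finite (Submodule R (M ⧸ S)) := by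
  rw [← finite_coe_iff]
  exact (comapMkQRelIso S).toEquiv.finite_iff.symm

def graphOf {A S : Submodule R M} (φ : A →ₗ[R] S) : Submodule R M :=
  LinearMap.range (A.subtype + S.subtype ∘ₗ φ)

variable {A S : Submodule R M}

theorem mem_graphOf {φ : A →ₗ[R] S} {x : M} : x ∈ graphOf φ ↔ ∃ a : A, (a : M) + φ a = x :=
  Iff.rfl

theorem graphOf_injective (h : A ⊓ S = ⊥) : Injective (graphOf (A := A) (S := S)) := by
  intro φ ψ hφψ
  ext a
  obtain ⟨b, hb⟩ := mem_graphOf.mp (hφψ ▸ mem_graphOf.mpr ⟨a, rfl⟩ : (a : M) + φ a ∈ graphOf ψ)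
  have hab : (a : M) - b ∈ A ⊓ S :=
    ⟨sub_mem a.2 b.2, by
      rw [show (a : M) - b = ψ b - φ a by rw [sub_eq_sub_iff_add_eq_add, ← hb, add_comm]]
      exact sub_mem (ψ b).2 (φ a).2⟩
  obtain rfl : a = b := Subtype.ext (sub_eq_zero.mp (by rwa [h, mem_bot] at hab))
  exact (add_left_cancel hb).symm

theorem graphOf_inf_eq_bot {N : Submodule R M} (hA : A ⊓ N = ⊥) (hS : S ≤ N) (φ : A →ₗ[R] S) :
    graphOf φ ⊓ N = ⊥ := by
  refine eq_bot_iff.mpr fun x ⟨⟨a, hax⟩, hxN⟩ => ?_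
  have ha : (a : M) ∈ A ⊓ N :=
    ⟨a.2, by
      rw [show (a : M) = x - φ a by rw [← hax]; simp]; exact sub_mem hxN (hS (φ a).2)⟩
  rw [hA, mem_bot] at ha
  rw [mem_bot, ← hax]
  simp [coe_eq_zero.mp ha]

theorem graphOf_ne_bot [Nontrivial A] (h : A ⊓ S = ⊥) (φ : A →ₗ[R] S) : graphOf φ ≠ ⊥ := by
  obtain ⟨a, ha⟩ := exists_ne (0 : A)
  refine (Submodule.ne_bot_iff _).mpr ⟨a + φ a, mem_graphOf.mpr ⟨a, rfl⟩, fun h0 => ha ?_⟩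
  have haS : (a : M) ∈ A ⊓ S := ⟨a.2, by
    rw [eq_neg_of_add_eq_zero_left h0]; exact neg_mem (φ a).2⟩
  rw [h, mem_bot] at haS
  exact coe_eq_zero.mp haS

theorem infinite_setOf_ne_bot_ne_top {N : Submodule R M} [Nontrivial S]
    [Infinite (Module.End R S)] (hN : N ≠ ⊥) (hSN : S ≤ N) (hAN : A ⊓ N = ⊥)
    {π : A →ₗ[R] S} (hπ : Surjective π) :
    {K : Submodule R M | K ≠ ⊥ ∧ K ≠ ⊤}.Infinite := by
  have : Nontrivial A := hπ.nontrivial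
  have hAS : A ⊓ S = ⊥ := eq_bot_iff.mpr (hAN ▸ inf_le_inf_left A hSN)
  refine infinite_of_injective_forall_mem (f := fun g : Module.End R S => graphOf (g ∘ₗ π))
    (fun g h hgh => (LinearMap.cancel_right hπ).mp (graphOf_injective hAS hgh)) fun g =>
    ⟨graphOf_ne_bot hAS _, fun htop => hN ?_⟩
  simpa [htop] using graphOf_inf_eq_bot hAN hSN (g ∘ₗ π)

theorem infinite_linearMap_of_infinite_isCompl {p q₀ : Submodule R M} (h₀ : IsCompl p q₀)
    (h : {q | IsCompl p q}.Infinite) : Infinite (q₀ →ₗ[R] p) := by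
  have := h.to_subtype
  refine Infinite.of_injective (fun q : {q | IsCompl p q} => projectionOnto p q q.2 ∘ₗ q₀.subtype)
    fun q q' hqq' => Subtype.ext ?_
  have hproj : projectionOnto p q q.2 = projectionOnto p q' q'.2 :=
    LinearMap.ext_on_codisjoint h₀.codisjoint
      (fun x hx => by simp [projectionOnto_apply_left q.2 ⟨x, hx⟩,
        projectionOnto_apply_left q'.2 ⟨x, hx⟩])
      (fun x hx => LinearMap.congr_fun hqq' ⟨x, hx⟩)
  simpa only [ker_projectionOnto] using congrArg LinearMap.ker hproj

theorem isCompl_comap_subtype_of_inf_eq_bot {T K S : Submodule R M} (hKS : K ⊓ S = ⊥)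
    (hT : K ⊔ S = T) : IsCompl (S.comap T.subtype) (K.comap T.subtype) := by
  refine T.mapIic.isCompl_iff.mpr ?_
  rw [Iic.isCompl_iff]
  simp only [coe_mapIic_apply, map_comap_subtype]
  rw [inf_eq_right.mpr (hT ▸ le_sup_right : S ≤ T), inf_eq_right.mpr (hT ▸ le_sup_left : K ≤ T),
    disjoint_iff, inf_comm, hKS, sup_comm, hT]
  exact ⟨rfl, rfl⟩

theorem comap_subtype_injOn (T : Submodule R M) : InjOn (comap T.subtype) (Iic T) :=
  fun K hK K' hK' h => by
    simpa [map_comap_subtype, inf_eq_right.mpr (mem_Iic.mp hK),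
      inf_eq_right.mpr (mem_Iic.mp hK')] using congrArg (map T.subtype) h

theorem infinite_linearMap_of_infinite_complements {K₀ S : Submodule R M} (hK₀ : K₀ ⊓ S = ⊥)
    (h : {K | K ⊓ S = ⊥ ∧ K ⊔ S = K₀ ⊔ S}.Infinite) : Infinite (K₀ →ₗ[R] S) := by
  set T := K₀ ⊔ S
  have hcompl : {q | IsCompl (S.comap T.subtype) q}.Infinite :=
    infinite_of_injOn_mapsTo ((comap_subtype_injOn T).mono fun K hK => le_sup_left.trans hK.2.le)
      (fun K hK => isCompl_comap_subtype_of_inf_eq_bot hK.1 hK.2) h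
  have := infinite_linearMap_of_infinite_isCompl (isCompl_comap_subtype_of_inf_eq_bot hK₀ rfl)
    hcompl
  exact ((comapSubtypeEquivOfLe le_sup_left).arrowCongrAddEquiv
    (comapSubtypeEquivOfLe le_sup_right)).toEquiv.infinite_iff.mp this

theorem exists_quotient_equiv_of_ne_zero {A S : Submodule R M} [IsSimpleModule R S]
    {f : A →ₗ[R] S} (hf : f ≠ 0) :
    ∃ B ≤ A, Nonempty ((A ⧸ B.comap A.subtype) ≃ₗ[R] S) := by
  have hsurj : Surjective f :=
    LinearMap.range_eq_top.mp
      ((eq_bot_or_eq_top _).resolve_left (LinearMap.range_eq_bot.not.mpr hf))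
  refine ⟨(LinearMap.ker f).map A.subtype, map_subtype_le _ _,
    ⟨(quotEquivOfEq _ _ ?_).trans (f.quotKerEquivOfSurjective hsurj)⟩⟩
  exact comap_map_eq_of_injective A.injective_subtype _

end Submodule

namespace LinearMap

variable {R X S : Type*} [Ring R] [AddCommGroup X] [Module R X] [AddCommGroup S] [Module R S]

theorem exists_eq_comp_of_ker_le {f₁ : X →ₗ[R] S} (hf₁ : Surjective f₁) {f : X →ₗ[R] S}
    (h : ker f₁ ≤ ker f) : ∃ g : Module.End R S, g ∘ₗ f₁ = f :=
  ⟨(ker f₁).liftQ f h ∘ₗ (f₁.quotKerEquivOfSurjective hf₁).symm.toLinearMap,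
    ext fun x => by simp [quotKerEquivOfSurjective_symm_apply]⟩

/-- A map onto a simple module is determined by its kernel up to an endomorphism of the target. -/
theorem finite_of_finite_end [IsSimpleModule R S] [Finite (Module.End R S)]
    [Finite (Submodule R X)] : Finite (X →ₗ[R] S) := by
  have fiber : ∀ f₁ : X →ₗ[R] S, {f : X →ₗ[R] S | ker f = ker f₁}.Finite := by
    intro f₁
    rcases eq_bot_or_eq_top (range f₁) with h | h
    · refine (finite_singleton 0).subset fun f (hf : ker f = ker f₁) => ?_
      rw [range_eq_bot.mp h, ker_zero, ker_eq_top] at hf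
      exact hf
    · exact (Set.finite_range fun g : Module.End R S => g ∘ₗ f₁).subset
        fun f (hf : ker f = ker f₁) => exists_eq_comp_of_ker_le (range_eq_top.mp h) hf.ge
  refine finite_univ_iff.mp (((toFinite (Set.range fun f : X →ₗ[R] S => ker f)).preimage'
    (f := fun f => ker f) ?_).subset fun f _ => ⟨f, rfl⟩)
  rintro _ ⟨f₁, rfl⟩
  exact fiber f₁

end LinearMap

namespace Submodule

variable {R M : Type*} [Ring R] [AddCommGroup M] [Module R M]

theorem infinite_end_of_infinite_linearMap {K₀ S : Submodule R M} [IsSimpleModule R S]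
    [Infinite (K₀ →ₗ[R] S)] (hK₀ : K₀ ⊓ S = ⊥) (hS : (Ici S).Finite) :
    Infinite (Module.End R S) := by
  by_contra hfin
  have : Finite (Module.End R S) := not_infinite_iff_finite.mp hfin
  have : Finite (Submodule R K₀) :=
    K₀.mapIic.toEquiv.finite_iff.mpr (finite_Iic_of_inf_eq_bot hK₀ hS).to_subtype
  exact (LinearMap.finite_of_finite_end : Finite (K₀ →ₗ[R] S)).false

theorem infinite_end_and_exists_quotient_equiv {N S : Submodule R M} [IsSimpleModule R S]
    (hSN : S ≤ N) (hW : {K : Submodule R M | K ⊓ N = ⊥}.Infinite)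
    (hF : {K : Submodule R M | K ⊓ N ≠ ⊥}.Finite) :
    Infinite (Module.End R S) ∧ ∃ A B : Submodule R M, B ≤ A ∧ N ⊓ A = ⊥ ∧
      Nonempty ((A ⧸ (B.comap A.subtype)) ≃ₗ[R] S) := by
  have hS : S ≠ ⊥ := (isSimpleModule_iff_isAtom.mp ‹_›).1
  have hdisj : ∀ K : Submodule R M, K ⊓ N = ⊥ → K ⊓ S = ⊥ :=
    fun K hK => eq_bot_iff.mpr (hK ▸ inf_le_inf_left K hSN)
  obtain ⟨T, hT⟩ := hW.exists_infinite_fiber (f := (· ⊔ S))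
    (fun K _ => Ici_subset_setOf_inf_ne_bot hS hSN (show S ≤ K ⊔ S from le_sup_right)) hF
  obtain ⟨K₀, hK₀N, rfl⟩ := hT.nonempty
  have : Infinite (K₀ →ₗ[R] S) := infinite_linearMap_of_infinite_complements (hdisj K₀ hK₀N)
    (hT.mono fun K hK => ⟨hdisj K hK.1, hK.2⟩)
  obtain ⟨f, hf⟩ := exists_ne (0 : K₀ →ₗ[R] S)
  obtain ⟨B, hB, e⟩ := exists_quotient_equiv_of_ne_zero hf
  exact ⟨infinite_end_of_infinite_linearMap (hdisj K₀ hK₀N)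
    (hF.subset (Ici_subset_setOf_inf_ne_bot hS hSN)), K₀, B, hB, inf_comm N K₀ ▸ hK₀N, e⟩

end Submodule

open Submodule

theorem statement10_general {R : Type*} [Ring R] {M : Type*} [AddCommGroup M] [Module R M]
    (N : Submodule R M) (hN : N ≠ ⊥) :
    ({K : Submodule R M | K ≠ ⊥ ∧ K ≠ ⊤}.Infinite ∧
      {K : Submodule R M | K ≠ ⊥ ∧ K ≠ ⊤ ∧ K ≠ N ∧ K ⊓ N ≠ ⊥}.Finite) ↔
    (∃ S : Submodule R M, S ≤ N ∧ IsSimpleModule R S ∧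
      (∀ U : Submodule R M, U ≤ N → IsSimpleModule R U → U = S) ∧
      Infinite (Module.End R S) ∧
      {W : Submodule R (M ⧸ S) | W ≠ ⊥ ∧ W ≠ ⊤}.Finite ∧
      (∃ A B : Submodule R M, B ≤ A ∧ N ⊓ A = ⊥ ∧
        Nonempty ((A ⧸ (B.comap A.subtype)) ≃ₗ[R] S))) := by
  constructor
  · rintro ⟨hV, hD⟩
    have hF := finite_setOf_inf_ne_bot_of_finite hD
    have hW := infinite_setOf_inf_eq_bot hV hF
    obtain ⟨S, hS, hSN⟩ :=
      exists_isAtom_le_of_finite_Iic hN (finite_Iic_of_finite_setOf_inf_ne_bot hF)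
    have hSfin : (Ici S).Finite := hF.subset (Ici_subset_setOf_inf_ne_bot hS.1 hSN)
    have := isSimpleModule_iff_isAtom.mpr hS
    obtain ⟨hEnd, hAB⟩ := infinite_end_and_exists_quotient_equiv hSN hW hF
    exact ⟨S, hSN, this, fun U hUN hU =>
      hS.eq_of_infinite_setOf_inf_eq_bot (isSimpleModule_iff_isAtom.mp hU) hSN hUN hW hF, hEnd,
      finite_setOf_ne_bot_ne_top_iff.mpr (finite_Ici_iff.mp hSfin), hAB⟩
  · rintro ⟨S, hSN, hS, huniq, hEnd, hQ, A, B, -, hNA, ⟨e⟩⟩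
    have hSfin : (Ici S).Finite := finite_Ici_iff.mpr (finite_setOf_ne_bot_ne_top_iff.mp hQ)
    have hF : {K : Submodule R M | K ⊓ N ≠ ⊥} ⊆ Ici S := fun K hK =>
      ((isSimpleModule_iff_isAtom.mp hS).le_of_forall_isAtom_eq hSfin
        (fun U hUN hU => huniq U hUN (isSimpleModule_iff_isAtom.mpr hU)) inf_le_right hK).trans
        inf_le_left
    have := IsSimpleModule.nontrivial R S
    exact ⟨infinite_setOf_ne_bot_ne_top hN hSN (inf_comm N A ▸ hNA)
        (π := e.toLinearMap ∘ₗ mkQ _) (e.surjective.comp (mkQ_surjective _)),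
      (hSfin.subset hF).subset fun K hK => hK.2.2.2⟩

/-- Let `N` be a nontrivial submodule of `M`.  The following are equivalent:
(1) `M` has infinitely many nontrivial submodules and `deg(N)` is finite;
(2) (i) `N` contains a unique simple submodule `S`; (ii) `End(S)` is infinite;
(iii) `M/S` has only finitely many nontrivial submodules;
(iv) there are submodules `B ⊆ A ⊆ M` with `N ⊓ A = ⊥` and `A/B ≅ S`. -/
theorem statement10 {R : Type*} [Ring R] {M : Type*} [AddCommGroup M] [Module R M]
    (N : Submodule R M) (hN : N ≠ ⊥) (hN' : N ≠ ⊤) :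
    ({K : Submodule R M | K ≠ ⊥ ∧ K ≠ ⊤}.Infinite ∧
      {K : Submodule R M | K ≠ ⊥ ∧ K ≠ ⊤ ∧ K ≠ N ∧ K ⊓ N ≠ ⊥}.Finite) ↔
    (∃ S : Submodule R M, S ≤ N ∧ IsSimpleModule R S ∧
      (∀ U : Submodule R M, U ≤ N → IsSimpleModule R U → U = S) ∧
      Infinite (Module.End R S) ∧
      {W : Submodule R (M ⧸ S) | W ≠ ⊥ ∧ W ≠ ⊤}.Finite ∧
      (∃ A B : Submodule R M, B ≤ A ∧ N ⊓ A = ⊥ ∧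
        Nonempty ((A ⧸ (B.comap A.subtype)) ≃ₗ[R] S))) :=
  statement10_general N hN
end

section
/- Let M be a left R-module such that M has infinitely many nontrivial submodules and the clique number ω(M) of the intersection graph G(M) is finite. Then: (iv) every nontrivial submodule of M either contains Soc(M) or is a uniform module; (v) a set C of nontrivial submodules of M is a maximal clique of G(M) if and only if there exists a simple submodule N of M such that C is exactly the set of all nontrivial submodules of M containing N. -/
/-- A clique of the intersection graph `G(M)`: a set of nontrivial submodules any two
distinct members of which have nonzero intersection. -/
def IsIntClique {R : Type*} [Ring R] {M : Type*} [AddCommGroup M] [Module R M]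
    (C : Set (Submodule R M)) : Prop :=
  (∀ N ∈ C, N ≠ ⊥ ∧ N ≠ ⊤) ∧ ∀ N ∈ C, ∀ K ∈ C, N ≠ K → N ⊓ K ≠ ⊥

/-- The clique number `ω(M)` of `G(M)`: the supremum of the cardinalities of cliques. -/
noncomputable def cliqueNumber (R : Type*) [Ring R] (M : Type*) [AddCommGroup M]
    [Module R M] : Cardinal :=
  sSup {c : Cardinal | ∃ C : Set (Submodule R M), IsIntClique C ∧ c = Cardinal.mk C}

/-- The socle of a module: the sum of all its simple submodules. -/
def socle (R : Type*) [Ring R] (M : Type*) [AddCommGroup M] [Module R M] :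
    Submodule R M :=
  sSup {A : Submodule R M | IsSimpleModule R A}

section Helpers

variable {R : Type*} [Ring R] {M : Type*} [AddCommGroup M] [Module R M]

/-- Every clique is finite when the clique number is finite. -/
lemma isIntClique_finite (homega : cliqueNumber R M < Cardinal.aleph0)
    {C : Set (Submodule R M)} (hC : IsIntClique C) : C.Finite := by
  have hbdd : BddAbove {c : Cardinal |
      ∃ C : Set (Submodule R M), IsIntClique C ∧ c = Cardinal.mk C} := by
    refine ⟨Cardinal.mk (Submodule R M), ?_⟩
    rintro c ⟨D, -, rfl⟩
    exact Cardinal.mk_set_le D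
  have hle : Cardinal.mk C ≤ cliqueNumber R M := le_csSup hbdd ⟨C, hC, rfl⟩
  exact Cardinal.lt_aleph0_iff_set_finite.mp (lt_of_le_of_lt hle homega)

/-- The set of nontrivial submodules containing a fixed nonzero submodule is a clique. -/
lemma clique_above {a : Submodule R M} (ha : a ≠ ⊥) :
    IsIntClique {K : Submodule R M | (K ≠ ⊥ ∧ K ≠ ⊤) ∧ a ≤ K} := by
  refine ⟨fun N hN => hN.1, ?_⟩
  rintro N hN K hK -
  intro h
  exact ha (le_bot_iff.mp (h ▸ le_inf hN.2 hK.2))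

lemma atom_inf_eq_bot {a b : Submodule R M} (ha : IsAtom a) (h : ¬ a ≤ b) : a ⊓ b = ⊥ := by
  rcases ha.le_iff.mp inf_le_left with h' | h'
  · exact h'
  · exact absurd (inf_eq_left.mp h') h

/-- In a modular lattice, joining an atom to `b` covers `b`. -/
lemma atom_covby {a b : Submodule R M} (ha : IsAtom a) (hab : ¬ a ≤ b) : b ⋖ a ⊔ b := by
  constructor
  · refine lt_of_le_of_ne le_sup_right fun h => hab ?_
    rw [h]; exact le_sup_left
  · intro c hbc hc
    have h1 : c = b ⊔ a ⊓ c := by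
      have h2 : (b ⊔ a) ⊓ c = b ⊔ a ⊓ c := sup_inf_assoc_of_le a hbc.le
      have h3 : c ≤ b ⊔ a := by rw [sup_comm]; exact hc.le
      rw [inf_eq_right.mpr h3] at h2
      exact h2
    rcases ha.le_iff.mp inf_le_left with h' | h'
    · rw [h', sup_bot_eq] at h1
      exact hbc.ne' h1
    · have : a ≤ c := inf_eq_left.mp h'
      have : c = b ⊔ a := by
        refine le_antisymm ?_ (sup_le hbc.le this)
        rw [h1]; exact sup_le le_sup_left (le_trans inf_le_left le_sup_right)
      rw [this, sup_comm] at hc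
      exact lt_irrefl _ hc

/-- Every nontrivial submodule contains an atom. -/
lemma exists_atom_le (homega : cliqueNumber R M < Cardinal.aleph0)
    {K : Submodule R M} (h0 : K ≠ ⊥) (h1 : K ≠ ⊤) :
    ∃ a : Submodule R M, IsAtom a ∧ a ≤ K := by
  by_contra hno
  push_neg at hno
  have step : ∀ L : {L : Submodule R M // L ≠ ⊥ ∧ L ≤ K},
      ∃ L' : {L : Submodule R M // L ≠ ⊥ ∧ L ≤ K}, (L' : Submodule R M) < L := by
    rintro ⟨L, hL0, hLK⟩
    have hnotatom : ¬ IsAtom L := fun h => hno L h hLK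
    rw [IsAtom, not_and_or] at hnotatom
    rcases hnotatom with h | h
    · exact absurd hL0 (by simpa using h)
    · push_neg at h
      obtain ⟨b, hbL, hb0⟩ := h
      exact ⟨⟨b, hb0, hbL.le.trans hLK⟩, hbL⟩
  choose g hg using step
  set seq : ℕ → {L : Submodule R M // L ≠ ⊥ ∧ L ≤ K} :=
    fun n => g^[n] ⟨K, h0, le_rfl⟩ with hseq
  have hanti : StrictAnti (fun n => ((seq n : Submodule R M))) := by
    apply strictAnti_nat_of_succ_lt
    intro n
    have : seq (n + 1) = g (seq n) := by
      rw [hseq]; exact Function.iterate_succ_apply' g n _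
    rw [this]
    exact hg (seq n)
  have hclique : IsIntClique (Set.range fun n => ((seq n : Submodule R M))) := by
    constructor
    · rintro N ⟨n, rfl⟩
      exact ⟨(seq n).2.1, fun h => h1 (top_le_iff.mp (h ▸ (seq n).2.2))⟩
    · rintro N ⟨m, rfl⟩ L ⟨n, rfl⟩ hne h
      rcases lt_trichotomy m n with hmn | hmn | hmn
      · have := hanti hmn
        rw [inf_eq_right.mpr this.le] at h
        exact (seq n).2.1 h
      · exact hne (by rw [hmn])
      · have := hanti hmn
        rw [inf_eq_left.mpr this.le] at h
        exact (seq m).2.1 h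
  have hfin := isIntClique_finite homega hclique
  exact Set.infinite_range_of_injective hanti.injective hfin

/-- If an infinite set maps into a finite set, some fiber is infinite. -/
lemma exists_infinite_fiber' {α β : Type*} {s : Set α} (hs : s.Infinite) (f : α → β)
    (hf : (f '' s).Finite) : ∃ y, {x ∈ s | f x = y}.Infinite := by
  by_contra h
  push_neg at h
  have hsub : s ⊆ ⋃ y ∈ f '' s, {x ∈ s | f x = y} :=
    fun x hx => Set.mem_biUnion ⟨x, hx, rfl⟩ ⟨hx, rfl⟩
  exact hs ((hf.biUnion fun y _ => h y).subset hsub)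

/-- Under the standing hypotheses there are infinitely many atoms. -/
lemma atoms_infinite (hinf : {N : Submodule R M | N ≠ ⊥ ∧ N ≠ ⊤}.Infinite)
    (homega : cliqueNumber R M < Cardinal.aleph0) :
    {a : Submodule R M | IsAtom a}.Infinite := by
  by_contra hfin
  rw [Set.not_infinite] at hfin
  have hsub : {N : Submodule R M | N ≠ ⊥ ∧ N ≠ ⊤} ⊆
      ⋃ a ∈ {a : Submodule R M | IsAtom a}, {K | (K ≠ ⊥ ∧ K ≠ ⊤) ∧ a ≤ K} := by
    intro K hK
    obtain ⟨a, ha, haK⟩ := exists_atom_le homega hK.1 hK.2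
    exact Set.mem_biUnion ha ⟨hK, haK⟩
  exact hinf ((hfin.biUnion fun a ha => isIntClique_finite homega (clique_above ha.1)).subset
    hsub)

/-- Part (iv): every nontrivial submodule contains the socle or is uniform. -/
lemma part_iv (hinf : {N : Submodule R M | N ≠ ⊥ ∧ N ≠ ⊤}.Infinite)
    (homega : cliqueNumber R M < Cardinal.aleph0) :
    ∀ N : Submodule R M, N ≠ ⊥ → N ≠ ⊤ →
      socle R M ≤ N ∨
        (∀ A B : Submodule R M, A ≤ N → B ≤ N → A ≠ ⊥ → B ≠ ⊥ → A ⊓ B ≠ ⊥) := by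
  intro N hN0 hN1
  by_contra hcon
  push_neg at hcon
  obtain ⟨hsoc, A, B, hAN, hBN, hA0, hB0, hAB⟩ := hcon
  -- a simple submodule not inside N
  have hS : ∃ S : Submodule R M, IsAtom S ∧ ¬ S ≤ N := by
    by_contra h
    push_neg at h
    exact hsoc (sSup_le fun P hP => h P (isSimpleModule_iff_isAtom.mp hP))
  obtain ⟨S, hSat, hSN⟩ := hS
  have hSNbot : S ⊓ N = ⊥ := atom_inf_eq_bot hSat hSN
  -- atoms a ≤ A, b ≤ B
  have hAtop : A ≠ ⊤ := fun h => hN1 (top_le_iff.mp (h ▸ hAN))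
  have hBtop : B ≠ ⊤ := fun h => hN1 (top_le_iff.mp (h ▸ hBN))
  obtain ⟨a, haat, haA⟩ := exists_atom_le homega hA0 hAtop
  obtain ⟨b, hbat, hbB⟩ := exists_atom_le homega hB0 hBtop
  have haN : a ≤ N := haA.trans hAN
  have hbN : b ≤ N := hbB.trans hBN
  have hab : a ⊓ b = ⊥ := le_bot_iff.mp (hAB ▸ inf_le_inf haA hbB)
  have haneb : a ≠ b := by
    rintro rfl
    rw [inf_idem] at hab
    exact haat.1 hab
  -- modular computation
  have modcalc : ∀ x T : Submodule R M, x ≤ N → T ⊓ N = ⊥ → (x ⊔ T) ⊓ N = x := by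
    intro x T hx hT
    rw [sup_inf_assoc_of_le T hx, hT, sup_bot_eq]
  -- atoms below N are finite
  have hfinbelow : {T : Submodule R M | IsAtom T ∧ T ≤ N}.Finite := by
    have hCS : ((fun T => S ⊔ T) '' {T : Submodule R M | IsAtom T ∧ T ≤ N}).Finite := by
      refine (isIntClique_finite homega (clique_above hSat.1)).subset ?_
      rintro _ ⟨T, ⟨hTat, hTN⟩, rfl⟩
      refine ⟨⟨fun h => hSat.1 (le_bot_iff.mp (h ▸ le_sup_left)), fun h => ?_⟩, le_sup_left⟩
      -- if S ⊔ T = ⊤ then N = T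
      have h' : S ⊔ T = ⊤ := h
      have hNT : N = T := by
        have hm := modcalc T S hTN hSNbot
        rw [sup_comm] at h'
        rw [h', top_inf_eq] at hm
        exact hm
      have ha' : a = T := (hTat.le_iff_eq haat.1).mp (hNT ▸ haN)
      have hb' : b = T := (hTat.le_iff_eq hbat.1).mp (hNT ▸ hbN)
      rw [ha', hb', inf_idem] at hab
      exact hTat.1 hab
    refine Set.Finite.of_finite_image hCS ?_
    rintro T ⟨hTat, hTN⟩ T' ⟨hT'at, hT'N⟩ h
    have h' : S ⊔ T = S ⊔ T' := h
    have hle1 : T' ≤ S ⊔ T := by rw [h']; exact le_sup_right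
    have hle : T' ≤ T := by
      have h2 : (T ⊔ S) ⊓ N = T := modcalc T S hTN hSNbot
      rw [sup_comm] at h2
      exact h2 ▸ le_inf hle1 hT'N
    exact ((hTat.le_iff_eq hT'at.1).mp hle).symm
  -- atoms meeting N trivially form an infinite set
  have hAinf : {T : Submodule R M | IsAtom T ∧ T ⊓ N = ⊥}.Infinite := by
    by_contra hfin
    rw [Set.not_infinite] at hfin
    refine (atoms_infinite hinf homega) ((hfinbelow.union hfin).subset ?_)
    intro T hT
    by_cases h : T ≤ N
    · exact Or.inl ⟨hT, h⟩
    · exact Or.inr ⟨hT, atom_inf_eq_bot hT h⟩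
  -- sup with a has finite range on this infinite set
  have hsupa_ne_top : ∀ T : Submodule R M, T ⊓ N = ⊥ → a ⊔ T ≠ ⊤ := by
    intro T hTN h
    have hNa : N = a := by
      have hm := modcalc a T haN hTN
      rw [h, top_inf_eq] at hm
      exact hm
    have hb' : b = a := (haat.le_iff_eq hbat.1).mp (hNa ▸ hbN)
    rw [hb', inf_idem] at hab
    exact haat.1 hab
  have hsupb_ne_top : ∀ T : Submodule R M, T ⊓ N = ⊥ → b ⊔ T ≠ ⊤ := by
    intro T hTN h
    have hNb : N = b := by
      have hm := modcalc b T hbN hTN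
      rw [h, top_inf_eq] at hm
      exact hm
    have ha' : a = b := (hbat.le_iff_eq haat.1).mp (hNb ▸ haN)
    rw [ha', inf_idem] at hab
    exact hbat.1 hab
  have himg1 : ((fun T => a ⊔ T) '' {T : Submodule R M | IsAtom T ∧ T ⊓ N = ⊥}).Finite := by
    refine (isIntClique_finite homega (clique_above haat.1)).subset ?_
    rintro _ ⟨T, ⟨hTat, hTN⟩, rfl⟩
    exact ⟨⟨fun h => haat.1 (le_bot_iff.mp (h ▸ le_sup_left)), hsupa_ne_top T hTN⟩, le_sup_left⟩
  obtain ⟨X, hX⟩ := exists_infinite_fiber' hAinf _ himg1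
  have himg2 : ((fun T => b ⊔ T) ''
      {T ∈ {T : Submodule R M | IsAtom T ∧ T ⊓ N = ⊥} | a ⊔ T = X}).Finite := by
    refine (isIntClique_finite homega (clique_above hbat.1)).subset ?_
    rintro _ ⟨T, ⟨⟨hTat, hTN⟩, -⟩, rfl⟩
    exact ⟨⟨fun h => hbat.1 (le_bot_iff.mp (h ▸ le_sup_left)), hsupb_ne_top T hTN⟩, le_sup_left⟩
  obtain ⟨Y, hY⟩ := exists_infinite_fiber' hX _ himg2
  obtain ⟨T, hT, T', hT', hTT'⟩ := hY.nontrivial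
  obtain ⟨⟨⟨hTat, hTN⟩, haT⟩, hbT⟩ := hT
  obtain ⟨⟨⟨hT'at, hT'N⟩, haT'⟩, hbT'⟩ := hT'
  -- a is not below T
  have haT0 : ¬ a ≤ T := by
    intro h
    exact haat.1 (le_bot_iff.mp (hTN ▸ le_inf h haN))
  -- T ⋖ X
  have hcov : T ⋖ X := by
    have := atom_covby haat haT0
    rwa [haT] at this
  -- T < T ⊔ T' ≤ X
  have hT'T : ¬ T' ≤ T := by
    intro h
    exact hTT' ((hTat.le_iff_eq hT'at.1).mp h).symm
  have hlt : T < T ⊔ T' := lt_of_le_of_ne le_sup_left fun h => hT'T (h ▸ le_sup_right)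
  have hle2 : T ⊔ T' ≤ X := sup_le (haT ▸ le_sup_right) (haT' ▸ le_sup_right)
  have hXeq : T ⊔ T' = X := by
    rcases hcov.wcovBy.eq_or_eq hlt.le hle2 with h | h
    · exact absurd h.symm hlt.ne
    · exact h
  -- a ≤ Y
  have haY : a ≤ Y := by
    have hXY : X ≤ Y := hXeq ▸ sup_le (hbT ▸ le_sup_right) (hbT' ▸ le_sup_right)
    exact le_trans (haT ▸ le_sup_left) hXY
  -- Y ⊓ N = b
  have hYN : Y ⊓ N = b := by
    have := modcalc b T hbN hTN
    rwa [hbT] at this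
  have hab' : a ≤ b := hYN ▸ le_inf haY haN
  exact haneb ((hbat.le_iff_eq haat.1).mp hab')

end Helpers

/-- Let `M` have infinitely many nontrivial submodules and finite clique
number.  Then: (iv) every nontrivial submodule of `M` either contains `Soc(M)` or is
uniform; (v) a set `C` of nontrivial submodules is a maximal clique of `G(M)` iff there is
a simple submodule `N` such that `C` is exactly the set of nontrivial submodules
containing `N`. -/
theorem statement14 {R : Type*} [Ring R] {M : Type*} [AddCommGroup M] [Module R M]
    (hinf : {N : Submodule R M | N ≠ ⊥ ∧ N ≠ ⊤}.Infinite)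
    (homega : cliqueNumber R M < Cardinal.aleph0) :
    (∀ N : Submodule R M, N ≠ ⊥ → N ≠ ⊤ →
      socle R M ≤ N ∨
        (∀ A B : Submodule R M, A ≤ N → B ≤ N → A ≠ ⊥ → B ≠ ⊥ → A ⊓ B ≠ ⊥)) ∧
    (∀ C : Set (Submodule R M),
      (IsIntClique C ∧ ∀ C' : Set (Submodule R M), IsIntClique C' → C ⊆ C' → C = C') ↔
      (∃ N : Submodule R M, IsSimpleModule R N ∧
        C = {K : Submodule R M | K ≠ ⊥ ∧ K ≠ ⊤ ∧ N ≤ K})) := by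
  refine ⟨part_iv hinf homega, ?_⟩
  intro C
  constructor
  · rintro ⟨hC, hmax⟩
    -- C is nonempty
    have hCne : C.Nonempty := by
      by_contra h
      rw [Set.not_nonempty_iff_eq_empty] at h
      obtain ⟨K₀, hK₀⟩ := hinf.nonempty
      have hsingle : IsIntClique {K₀} := by
        refine ⟨?_, ?_⟩
        · rintro N rfl; exact hK₀
        · rintro N rfl K rfl hne; exact absurd rfl hne
      have := hmax {K₀} hsingle (h ▸ Set.empty_subset _)
      rw [h] at this
      exact (Set.singleton_nonempty K₀).ne_empty this.symm
    obtain ⟨K₀, hK₀⟩ := hCne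
    have hK₀nt := hC.1 K₀ hK₀
    -- find an atom below all members of C
    have claim : ∃ n : Submodule R M, IsAtom n ∧ ∀ K ∈ C, n ≤ K := by
      by_cases hall : ∀ K ∈ C, socle R M ≤ K
      · obtain ⟨n, hn, hnK⟩ := exists_atom_le homega hK₀nt.1 hK₀nt.2
        exact ⟨n, hn, fun K hK =>
          le_trans (le_sSup (isSimpleModule_iff_isAtom.mpr hn)) (hall K hK)⟩
      · push_neg at hall
        obtain ⟨K₁, hK₁C, hK₁soc⟩ := hall
        have hnt := hC.1 K₁ hK₁C
        rcases part_iv hinf homega K₁ hnt.1 hnt.2 with h | huniform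
        · exact absurd h hK₁soc
        · obtain ⟨n, hn, hnK⟩ := exists_atom_le homega hnt.1 hnt.2
          refine ⟨n, hn, fun K hK => ?_⟩
          by_cases hKK : K = K₁
          · exact hKK ▸ hnK
          · have h1 : K ⊓ K₁ ≠ ⊥ := hC.2 K hK K₁ hK₁C hKK
            have h2 : n ⊓ (K ⊓ K₁) ≠ ⊥ :=
              huniform n (K ⊓ K₁) hnK inf_le_right hn.1 h1
            have h3 : n ⊓ (K ⊓ K₁) = n := (hn.le_iff_eq h2).mp inf_le_left
            exact le_trans (h3 ▸ inf_le_right) inf_le_left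
    obtain ⟨n, hn, hnle⟩ := claim
    refine ⟨n, isSimpleModule_iff_isAtom.mpr hn, ?_⟩
    have hunion : IsIntClique (C ∪ {K : Submodule R M | K ≠ ⊥ ∧ K ≠ ⊤ ∧ n ≤ K}) := by
      have key : ∀ K ∈ C ∪ {K : Submodule R M | K ≠ ⊥ ∧ K ≠ ⊤ ∧ n ≤ K}, n ≤ K := by
        rintro K (hK | hK)
        · exact hnle K hK
        · exact hK.2.2
      refine ⟨?_, ?_⟩
      · rintro K (hK | hK)
        · exact hC.1 K hK
        · exact ⟨hK.1, hK.2.1⟩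
      · intro K hK L hL _ h
        exact hn.1 (le_bot_iff.mp (h ▸ le_inf (key K hK) (key L hL)))
    have hCeq := hmax _ hunion Set.subset_union_left
    ext K
    constructor
    · intro hK
      exact ⟨(hC.1 K hK).1, (hC.1 K hK).2, hnle K hK⟩
    · intro hK
      rw [hCeq]
      exact Or.inr hK
  · rintro ⟨n, hsimple, rfl⟩
    have hn : IsAtom n := isSimpleModule_iff_isAtom.mp hsimple
    have hntop : n ≠ ⊤ := by
      intro h
      obtain ⟨K, hK⟩ := hinf.nonempty
      have : K < n := h ▸ lt_top_iff_ne_top.mpr hK.2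
      exact hK.1 (hn.2 K this)
    have hnC : n ∈ {K : Submodule R M | K ≠ ⊥ ∧ K ≠ ⊤ ∧ n ≤ K} := ⟨hn.1, hntop, le_rfl⟩
    constructor
    · refine ⟨fun K hK => ⟨hK.1, hK.2.1⟩, ?_⟩
      intro K hK L hL _ h
      exact hn.1 (le_bot_iff.mp (h ▸ le_inf hK.2.2 hL.2.2))
    · intro C' hC' hsub
      refine Set.Subset.antisymm hsub fun K hK => ?_
      have hKnt := hC'.1 K hK
      by_cases h : K = n
      · exact h ▸ hnC
      · have hne : n ⊓ K ≠ ⊥ := hC'.2 n (hsub hnC) K hK (Ne.symm h)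
        have : n ⊓ K = n := (hn.le_iff_eq hne).mp inf_le_left
        exact ⟨hKnt.1, hKnt.2, this ▸ inf_le_right⟩
end

section
/- For a left R-module M, the following conditions are equivalent: (1) the intersection graph G(M) is triangle-free, i.e. there do not exist three distinct nontrivial submodules of M which pairwise have nonzero intersection; (2) M is of one of the following types: (i) the submodules of M are totally ordered by inclusion and M has length at most 3; (ii) M = S₁ + S₂ with S₁, S₂ simple submodules satisfying S₁ ∩ S₂ = 0; (iii) there exist simple submodules S₁, S₂ of M with S₁ ∩ S₂ = 0 such that Soc(M) = S₁ + S₂ and Soc(M) is the unique maximal submodule of M (and Soc(M) ≠ M). -/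
section Modular

variable {α : Type*} [Lattice α] [IsModularLattice α]

section OrderBot

variable [OrderBot α]

theorem IsAtom.isAtom_and_covBy_of_lt {s t a : α} (hs : IsAtom s) (hst : s ⋖ t) (hat : a < t)
    (ha : a ≠ ⊥) (hsa : ¬ s ≤ a) : IsAtom a ∧ a ⋖ t := by
  have has : ¬ a ≤ s := fun h => hsa ((hs.le_iff_eq ha).mp h).ge
  have hsup : s ⊔ a = t :=
    (hst.eq_or_eq le_sup_left (sup_le hst.le hat.le)).resolve_left
      fun h => has (h ▸ le_sup_right)
  have hinf : s ⊓ a = ⊥ :=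
    (hs.le_iff.mp inf_le_left).resolve_right fun h => hsa (h ▸ inf_le_right)
  refine ⟨?_, ?_⟩
  · rw [← bot_covBy_iff, ← hinf]
    exact inf_covBy_of_covBy_sup_left (hsup ▸ hst)
  · rw [← hsup]
    exact covBy_sup_of_inf_covBy_left (hinf ▸ hs.bot_covBy)

theorem covBy_sup_of_isAtom_of_inf_eq_bot {s₁ s₂ : α} (h₁ : IsAtom s₁) (h : s₁ ⊓ s₂ = ⊥) :
    s₂ ⋖ s₁ ⊔ s₂ :=
  covBy_sup_of_inf_covBy_left (h ▸ h₁.bot_covBy)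

theorem isAtom_and_covBy_of_lt_sup {s₁ s₂ a : α} (h₁ : IsAtom s₁) (h₂ : IsAtom s₂)
    (h : s₁ ⊓ s₂ = ⊥) (ha : a ≠ ⊥) (hlt : a < s₁ ⊔ s₂) : IsAtom a ∧ a ⋖ s₁ ⊔ s₂ := by
  by_cases hs₁ : s₁ ≤ a
  · exact h₂.isAtom_and_covBy_of_lt (covBy_sup_of_isAtom_of_inf_eq_bot h₁ h) hlt ha
      fun hs₂ => hlt.not_ge (sup_le hs₁ hs₂)
  · rw [sup_comm] at hlt ⊢
    exact h₁.isAtom_and_covBy_of_lt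
      (covBy_sup_of_isAtom_of_inf_eq_bot h₂ (inf_comm s₁ s₂ ▸ h)) hlt ha hs₁

end OrderBot

variable [BoundedOrder α]

theorem le_sup_of_forall_isCoatom_eq {s₁ s₂ n : α} (h₁ : IsAtom s₁) (h₂ : IsAtom s₂)
    (h : s₁ ⊓ s₂ = ⊥) (hco : IsCoatom (s₁ ⊔ s₂)) (huniq : ∀ k, IsCoatom k → k = s₁ ⊔ s₂)
    (hn : n ≠ ⊤) : n ≤ s₁ ⊔ s₂ := by
  set t := s₁ ⊔ s₂
  by_contra hnt
  have hlt : n ⊓ t < t := inf_le_right.lt_of_ne fun he =>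
    hn (hco.2 n ((he ▸ inf_le_left : t ≤ n).lt_of_ne fun e => hnt e.ge))
  obtain ⟨c, hct, hnc⟩ : ∃ c, c ⋖ t ∧ n ⊓ t ≤ c := by
    by_cases h0 : n ⊓ t = ⊥
    · exact ⟨s₂, covBy_sup_of_isAtom_of_inf_eq_bot h₁ h, h0 ▸ bot_le⟩
    · exact ⟨n ⊓ t, (isAtom_and_covBy_of_lt_sup h₁ h₂ h h0 hlt).2, le_rfl⟩
  have hinf : t ⊓ (c ⊔ n) = c := by
    rw [inf_comm, sup_inf_assoc_of_le n hct.le, sup_eq_left.mpr hnc]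
  have htop : t ⊔ (c ⊔ n) = ⊤ := by
    rw [← sup_assoc, sup_eq_left.mpr hct.le]
    exact hco.2 _ (left_lt_sup.mpr hnt)
  have hcn : IsCoatom (c ⊔ n) :=
    covBy_top_iff.mp (htop ▸ covBy_sup_of_inf_covBy_left (by rwa [hinf]))
  exact hnt (huniq _ hcn ▸ le_sup_right)

end Modular

section Triangle

variable {α : Type*} [Lattice α] [BoundedOrder α]

def IsIntersectionTriangle (a b c : α) : Prop :=
  (a ≠ ⊥ ∧ a ≠ ⊤) ∧ (b ≠ ⊥ ∧ b ≠ ⊤) ∧ (c ≠ ⊥ ∧ c ≠ ⊤) ∧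
    a ≠ b ∧ a ≠ c ∧ b ≠ c ∧ a ⊓ b ≠ ⊥ ∧ a ⊓ c ≠ ⊥ ∧ b ⊓ c ≠ ⊥

variable (α) in
def IntersectionTriangleFree : Prop :=
  ¬ ∃ a b c : α, IsIntersectionTriangle a b c

theorem isIntersectionTriangle_of_chain {a b c : α} (ha : ⊥ < a) (hab : a < b) (hbc : b < c)
    (hc : c < ⊤) : IsIntersectionTriangle a b c := by
  refine ⟨⟨ha.ne', (hab.trans (hbc.trans hc)).ne⟩, ⟨(ha.trans hab).ne', (hbc.trans hc).ne⟩,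
    ⟨(ha.trans (hab.trans hbc)).ne', hc.ne⟩, hab.ne, (hab.trans hbc).ne, hbc.ne, ?_, ?_, ?_⟩
  · rw [inf_eq_left.mpr hab.le]; exact ha.ne'
  · rw [inf_eq_left.mpr (hab.trans hbc).le]; exact ha.ne'
  · rw [inf_eq_left.mpr hbc.le]; exact (ha.trans hab).ne'

theorem isIntersectionTriangle_inf {a b : α} (hab : ¬ a ≤ b) (hba : ¬ b ≤ a) (h : a ⊓ b ≠ ⊥) :
    IsIntersectionTriangle a b (a ⊓ b) := by
  refine ⟨⟨fun e => hab (e ▸ bot_le), fun e => hba (e ▸ le_top)⟩,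
    ⟨fun e => hba (e ▸ bot_le), fun e => hab (e ▸ le_top)⟩,
    ⟨h, fun e => hba ((inf_eq_top_iff.mp e).1 ▸ le_top)⟩,
    fun e => hab e.le, fun e => hab (e.le.trans inf_le_right),
    fun e => hba (e.le.trans inf_le_left), h, ?_, ?_⟩
  · rwa [inf_eq_right.mpr inf_le_left]
  · rwa [inf_eq_right.mpr inf_le_right]

theorem isIntersectionTriangle_of_lt_of_inf_eq_bot [IsModularLattice α] {x y z : α}
    (hyx : ¬ y ≤ x) (h : x ⊓ y = ⊥) (hz : z ≠ ⊥) (hzx : z < x) :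
    IsIntersectionTriangle z x (z ⊔ y) := by
  have hmod : (z ⊔ y) ⊓ x = z := by
    rw [sup_inf_assoc_of_le y hzx.le, inf_comm, h, sup_bot_eq]
  refine ⟨⟨hz, (hzx.trans_le le_top).ne⟩, ⟨((bot_lt_iff_ne_bot.mpr hz).trans hzx).ne', ?_⟩,
    ⟨fun e => hz (le_bot_iff.mp (e ▸ le_sup_left)), ?_⟩, hzx.ne, ?_, ?_, ?_, ?_, ?_⟩
  · rintro rfl; exact hyx le_top
  · intro e; rw [e, top_inf_eq] at hmod; exact hzx.ne' hmod
  · intro e; exact hyx ((le_sup_right.trans e.ge).trans hzx.le)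
  · intro e; exact hyx (le_sup_right.trans e.ge)
  · rwa [inf_eq_left.mpr hzx.le]
  · rwa [inf_eq_left.mpr le_sup_left]
  · rwa [inf_comm, hmod]

namespace IntersectionTriangleFree

theorem not_exists_chain (h : IntersectionTriangleFree α) :
    ¬ ∃ a b c : α, ⊥ < a ∧ a < b ∧ b < c ∧ c < ⊤ :=
  fun ⟨a, b, c, ha, hab, hbc, hc⟩ => h ⟨a, b, c, isIntersectionTriangle_of_chain ha hab hbc hc⟩

theorem inf_eq_bot (h : IntersectionTriangleFree α) {a b : α} (hab : ¬ a ≤ b) (hba : ¬ b ≤ a) :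
    a ⊓ b = ⊥ := by
  by_contra hne
  exact h ⟨a, b, a ⊓ b, isIntersectionTriangle_inf hab hba hne⟩

theorem isCoatom (h : IntersectionTriangleFree α) {x t : α} (hx : x ≠ ⊥) (hxt : x < t)
    (ht : t ≠ ⊤) : IsCoatom t := by
  refine ⟨ht, fun k hk => ?_⟩
  by_contra hk'
  exact h.not_exists_chain ⟨x, t, k, hx.bot_lt, hxt, hk, Ne.lt_top hk'⟩

variable [IsModularLattice α]

theorem isAtom (h : IntersectionTriangleFree α) {a b : α} (hab : ¬ a ≤ b) (hba : ¬ b ≤ a) :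
    IsAtom a := by
  refine ⟨fun e => hab (e ▸ bot_le), fun z hz => ?_⟩
  by_contra hz0
  exact h ⟨z, a, z ⊔ b, isIntersectionTriangle_of_lt_of_inf_eq_bot hba (h.inf_eq_bot hab hba)
    hz0 hz⟩

theorem le_or_le (h : IntersectionTriangleFree α) {x t : α} (hx : x ≠ ⊥) (hxt : x < t) (k : α) :
    k ≤ t ∨ t ≤ k := by
  by_contra! hk
  exact hx ((h.isAtom hk.2 hk.1).2 x hxt)

theorem eq_of_isCoatom (h : IntersectionTriangleFree α) {x t k : α} (hx : x ≠ ⊥) (hxt : x < t)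
    (ht : t ≠ ⊤) (hk : IsCoatom k) : k = t := by
  rcases h.le_or_le hx hxt k with hkt | htk
  · exact ((hk.le_iff.mp hkt).resolve_left ht).symm
  · exact ((h.isCoatom hx hxt ht).le_iff.mp htk).resolve_left hk.1

end IntersectionTriangleFree

theorem intersectionTriangleFree_of_total (htot : ∀ a b : α, a ≤ b ∨ b ≤ a)
    (hchain : ¬ ∃ a b c : α, ⊥ < a ∧ a < b ∧ b < c ∧ c < ⊤) : IntersectionTriangleFree α := by
  rintro ⟨a, b, c, ⟨ha, ha'⟩, ⟨hb, hb'⟩, ⟨hc, hc'⟩, hab, hac, hbc, -⟩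
  have no_chain : ∀ x y z : α, x ≠ ⊥ → z ≠ ⊤ → x ≤ y → y ≤ z → x ≠ y → y ≠ z → False :=
    fun x y z hx hz hxy hyz hxy' hyz' =>
      hchain ⟨x, y, z, hx.bot_lt, hxy.lt_of_ne hxy', hyz.lt_of_ne hyz', hz.lt_top⟩
  have hba := hab.symm
  have hca := hac.symm
  have hcb := hbc.symm
  rcases htot a b with _ | _ <;> rcases htot a c with _ | _ <;> rcases htot b c with _ | _ <;>
    first
    | exact no_chain a b c ‹_› ‹_› ‹_› ‹_› ‹_› ‹_›
    | exact no_chain a c b ‹_› ‹_› ‹_› ‹_› ‹_› ‹_›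
    | exact no_chain b a c ‹_› ‹_› ‹_› ‹_› ‹_› ‹_›
    | exact no_chain b c a ‹_› ‹_› ‹_› ‹_› ‹_› ‹_›
    | exact no_chain c a b ‹_› ‹_› ‹_› ‹_› ‹_› ‹_›
    | exact no_chain c b a ‹_› ‹_› ‹_› ‹_› ‹_› ‹_›

theorem intersectionTriangleFree_of_isAtom_or_eq (t : α)
    (h : ∀ n : α, n ≠ ⊥ → n ≠ ⊤ → IsAtom n ∨ n = t) : IntersectionTriangleFree α := by
  rintro ⟨a, b, c, ⟨ha, ha'⟩, ⟨hb, hb'⟩, ⟨hc, hc'⟩, hab, hac, hbc, hiab, hiac, hibc⟩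
  have eq_of_inf_ne_bot : ∀ {x y : α}, x ≠ ⊥ → x ≠ ⊤ → y ≠ ⊥ → y ≠ ⊤ → x ≠ y → x ⊓ y ≠ ⊥ →
      x = t ∨ y = t :=
    fun hx hx' hy hy' hxy hixy => by
      rcases h _ hx hx' with hx | hx <;> rcases h _ hy hy' with hy | hy
      · exact absurd (hx.disjoint_of_ne hy hxy).eq_bot hixy
      all_goals tauto
  have := eq_of_inf_ne_bot ha ha' hb hb' hab hiab
  have := eq_of_inf_ne_bot ha ha' hc hc' hac hiac
  have := eq_of_inf_ne_bot hb hb' hc hc' hbc hibc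
  grind

end Triangle

section Classification

variable {α : Type*} [CompleteLattice α] [IsModularLattice α]

theorem IntersectionTriangleFree.sSup_isAtom_le (h : IntersectionTriangleFree α) {x y : α}
    (hx : IsAtom x) (hyx : ¬ y ≤ x) : sSup {a : α | IsAtom a} ≤ x ⊔ y := by
  refine sSup_le fun a ha =>
    (h.le_or_le hx.1 (left_lt_sup.mpr hyx) a).resolve_right fun hle => ?_
  have hxa : x = a := (ha.le_iff.mp (le_sup_left.trans hle)).resolve_left hx.1
  exact hyx ((le_sup_right.trans hle).trans hxa.ge)

theorem IntersectionTriangleFree.classification (h : IntersectionTriangleFree α) :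
    ((∀ a b : α, a ≤ b ∨ b ≤ a) ∧ ¬ ∃ a b c : α, ⊥ < a ∧ a < b ∧ b < c ∧ c < ⊤) ∨
      (∃ s₁ s₂ : α, IsAtom s₁ ∧ IsAtom s₂ ∧ s₁ ⊓ s₂ = ⊥ ∧ s₁ ⊔ s₂ = ⊤) ∨
      (∃ s₁ s₂ : α, IsAtom s₁ ∧ IsAtom s₂ ∧ s₁ ⊓ s₂ = ⊥ ∧ sSup {a : α | IsAtom a} = s₁ ⊔ s₂ ∧
        IsCoatom (sSup {a : α | IsAtom a}) ∧
        ∀ k : α, IsCoatom k → k = sSup {a : α | IsAtom a}) := by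
  by_cases htot : ∀ a b : α, a ≤ b ∨ b ≤ a
  · exact Or.inl ⟨htot, h.not_exists_chain⟩
  obtain ⟨x, y, hxy, hyx⟩ : ∃ x y : α, ¬ x ≤ y ∧ ¬ y ≤ x := by
    simpa only [not_forall, not_or] using htot
  have hx := h.isAtom hxy hyx
  have hy := h.isAtom hyx hxy
  have hinf := h.inf_eq_bot hxy hyx
  by_cases htop : x ⊔ y = ⊤
  · exact Or.inr (Or.inl ⟨x, y, hx, hy, hinf, htop⟩)
  have hxt : x < x ⊔ y := left_lt_sup.mpr hyx
  have hsoc : sSup {a : α | IsAtom a} = x ⊔ y :=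
    (h.sSup_isAtom_le hx hyx).antisymm (sup_le (le_sSup hx) (le_sSup hy))
  rw [hsoc]
  exact Or.inr (Or.inr ⟨x, y, hx, hy, hinf, rfl, h.isCoatom hx.1 hxt htop,
    fun k hk => h.eq_of_isCoatom hx.1 hxt htop hk⟩)

end Classification

/-- For a module `M` the following are equivalent:
(1) `G(M)` is triangle-free;
(2) `M` is of one of the following types:
(i) the submodules of `M` are totally ordered by inclusion and `M` has length at most `3`
(i.e. there is no chain `⊥ < A < B < C < ⊤`);
(ii) `M = S₁ ⊕ S₂` with `S₁`, `S₂` simple;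
(iii) there are simple submodules `S₁`, `S₂` with `S₁ ⊓ S₂ = ⊥` such that
`Soc(M) = S₁ ⊔ S₂` is the unique maximal submodule of `M`. -/
theorem statement18 {R : Type*} [Ring R] {M : Type*} [AddCommGroup M] [Module R M] :
    (¬ ∃ A B C : Submodule R M,
        (A ≠ ⊥ ∧ A ≠ ⊤) ∧ (B ≠ ⊥ ∧ B ≠ ⊤) ∧ (C ≠ ⊥ ∧ C ≠ ⊤) ∧
        A ≠ B ∧ A ≠ C ∧ B ≠ C ∧
        A ⊓ B ≠ ⊥ ∧ A ⊓ C ≠ ⊥ ∧ B ⊓ C ≠ ⊥) ↔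
    (((∀ A B : Submodule R M, A ≤ B ∨ B ≤ A) ∧
        ¬ ∃ A B C : Submodule R M, ⊥ < A ∧ A < B ∧ B < C ∧ C < ⊤) ∨
      (∃ S₁ S₂ : Submodule R M, IsSimpleModule R S₁ ∧ IsSimpleModule R S₂ ∧
        S₁ ⊓ S₂ = ⊥ ∧ S₁ ⊔ S₂ = ⊤) ∨
      (∃ S₁ S₂ : Submodule R M, IsSimpleModule R S₁ ∧ IsSimpleModule R S₂ ∧
        S₁ ⊓ S₂ = ⊥ ∧ socle R M = S₁ ⊔ S₂ ∧
        IsCoatom (socle R M) ∧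
        ∀ K : Submodule R M, IsCoatom K → K = socle R M)) := by
  simp only [socle, isSimpleModule_iff_isAtom]
  refine ⟨IntersectionTriangleFree.classification, ?_⟩
  rintro (⟨htot, hchain⟩ | ⟨S₁, S₂, h₁, h₂, h, htop⟩ | ⟨S₁, S₂, h₁, h₂, h, hsoc, hco, huniq⟩)
  · exact intersectionTriangleFree_of_total htot hchain
  · refine intersectionTriangleFree_of_isAtom_or_eq ⊤ fun N hN hN' => Or.inl ?_
    exact (isAtom_and_covBy_of_lt_sup h₁ h₂ h hN (htop ▸ hN'.lt_top)).1
  · rw [hsoc] at hco huniq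
    refine intersectionTriangleFree_of_isAtom_or_eq (S₁ ⊔ S₂) fun N hN hN' => ?_
    rcases (le_sup_of_forall_isCoatom_eq h₁ h₂ h hco huniq hN').lt_or_eq with hlt | heq
    · exact Or.inl (isAtom_and_covBy_of_lt_sup h₁ h₂ h hN hlt).1
    · exact Or.inr heq
end
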